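/- arXiv:2011.12822 — 7 statements merged into one kernel-verified Lean document; each statement's English description precedes it below -/
import Mathlib

section
/- Every nonempty binary word (over a two-letter alphabet) has exactly one square-free reduct; that is, for every nonempty word W over a two-letter alphabet, the set of square-free words reachable from W by finitely many square reductions has cardinality exactly 1. -/
/-- A single square reduction: a word `U ++ (X ++ X) ++ V` (with `X` nonempty)
is replaced by `U ++ X ++ V`. -/
def Step {α : Type*} (W W' : List α) : Prop :=
  ∃ U X V : List α, X ≠ [] ∧ W = U ++ (X ++ X) ++ V ∧ W' = U ++ X ++ V

/-- `Reaches W W'` : `W'` is obtainable from `W` by a finite sequence of square reductions. -/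
def Reaches {α : Type*} (W W' : List α) : Prop := Relation.ReflTransGen Step W W'

/-- A word is square-free if it contains no square `X ++ X` (with `X` nonempty) as a factor. -/
def SquareFree {α : Type*} (W : List α) : Prop :=
  ∀ X : List α, X ≠ [] → ¬ (X ++ X) <:+: W

/-- The set of square-free reducts of `W`. -/
def Reducts {α : Type*} (W : List α) : Set (List α) := {R | Reaches W R ∧ SquareFree R}

/-!
The first letter, the last letter and the set of letters occurring are invariant under square
reductions. A square-free word has no two equal adjacent letters, so over two letters it
alternates and stops before length four (`abab` is a square): it is one of `ε, 0, 1, 01, 10,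
010, 101`, and these seven words are told apart by the invariants. A reachable word of minimal
length is square-free, which gives existence.
-/

variable {α : Type*} {W W' : List α}

theorem Step.length_lt (h : Step W W') : W'.length < W.length := by
  obtain ⟨U, X, V, hX, rfl, rfl⟩ := h
  have : 0 < X.length := List.length_pos_iff.mpr hX
  simp only [List.length_append]
  omega

theorem Step.head?_eq (h : Step W W') : W.head? = W'.head? := by
  obtain ⟨U, _ | ⟨x, X⟩, V, hX, rfl, rfl⟩ := h
  · exact absurd rfl hX
  · cases U <;> simp

theorem Step.reverse (h : Step W W') : Step W.reverse W'.reverse := by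
  obtain ⟨U, X, V, hX, rfl, rfl⟩ := h
  exact ⟨V.reverse, X.reverse, U.reverse, by simpa using hX, by simp, by simp⟩

theorem Step.getLast?_eq (h : Step W W') : W.getLast? = W'.getLast? := by
  simpa only [List.head?_reverse] using h.reverse.head?_eq

theorem Step.mem_iff (h : Step W W') (a : α) : a ∈ W ↔ a ∈ W' := by
  obtain ⟨U, X, V, -, rfl, rfl⟩ := h
  simp only [List.mem_append]
  tauto

theorem Reaches.apply_eq {β : Sort*} {f : List α → β}
    (hf : ∀ {W W' : List α}, Step W W' → f W = f W') (h : Reaches W W') : f W = f W' := by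
  induction h with
  | refl => rfl
  | tail _ hstep ih => exact ih.trans (hf hstep)

theorem Reaches.head?_eq (h : Reaches W W') : W.head? = W'.head? :=
  h.apply_eq Step.head?_eq

theorem Reaches.getLast?_eq (h : Reaches W W') : W.getLast? = W'.getLast? :=
  h.apply_eq Step.getLast?_eq

theorem Reaches.mem_iff (h : Reaches W W') (a : α) : a ∈ W ↔ a ∈ W' :=
  (h.apply_eq fun hstep => propext (hstep.mem_iff a)).to_iff

theorem exists_reaches_squareFree (W : List α) : ∃ R, Reaches W R ∧ SquareFree R := by
  obtain ⟨R, hR, hmin⟩ := (measure List.length).wf.has_min {R | Reaches W R} ⟨W, .refl⟩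
  refine ⟨R, hR, fun X hX ⟨U, V, hUVR⟩ => ?_⟩
  have hstep : Step R (U ++ X ++ V) := ⟨U, X, V, hX, hUVR.symm, rfl⟩
  exact hmin _ (hR.tail hstep) hstep.length_lt

theorem SquareFree.isChain_ne (h : SquareFree W) : W.IsChain (· ≠ ·) :=
  List.isChain_iff_forall_rel_of_append_cons_cons.mpr fun {a _ l₁ l₂} hW hab =>
    h [a] (List.cons_ne_nil a []) ⟨l₁, l₂, by simp [hW, hab]⟩

theorem SquareFree.mem_fin_two {W : List (Fin 2)} (h : SquareFree W) :
    W ∈ [[], [0], [1], [0, 1], [1, 0], [0, 1, 0], [1, 0, 1]] := by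
  have hchain := h.isChain_ne
  obtain _ | ⟨a, _ | ⟨b, _ | ⟨c, _ | ⟨d, t⟩⟩⟩⟩ := W
  · decide
  · clear h; revert a; decide
  · clear h; revert a b hchain; decide
  · clear h; revert a b c hchain; decide
  · simp only [List.isChain_cons_cons, ne_eq] at hchain
    obtain ⟨hca, hdb⟩ : c = a ∧ d = b := by omega
    exact (h [a, b] (List.cons_ne_nil a _) ⟨[], t, by simp [hca, hdb]⟩).elim

theorem SquareFree.eq_of_fin_two {A B : List (Fin 2)} (hA : SquareFree A) (hB : SquareFree B)
    (hhead : A.head? = B.head?) (hlast : A.getLast? = B.getLast?)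
    (hmem : ∀ a, a ∈ A ↔ a ∈ B) : A = B := by
  have hA' := hA.mem_fin_two
  have hB' := hB.mem_fin_two
  fin_cases hA' <;> fin_cases hB' <;> first | rfl | (revert hhead hlast hmem; decide)

theorem Reaches.eq_of_squareFree_fin_two {W A B : List (Fin 2)} (hA : Reaches W A)
    (hB : Reaches W B) (hAsf : SquareFree A) (hBsf : SquareFree B) : A = B :=
  hAsf.eq_of_fin_two hBsf (hA.head?_eq.symm.trans hB.head?_eq)
    (hA.getLast?_eq.symm.trans hB.getLast?_eq) fun a => (hA.mem_iff a).symm.trans (hB.mem_iff a)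

theorem binary_unique_reduct_general (W : List (Fin 2)) :
    (Reducts W).ncard = 1 := by
  obtain ⟨R, hR, hRsf⟩ := exists_reaches_squareFree W
  refine Set.ncard_eq_one.mpr ⟨R, Set.eq_singleton_iff_unique_mem.mpr ⟨⟨hR, hRsf⟩, ?_⟩⟩
  rintro A ⟨hA, hAsf⟩
  exact hA.eq_of_squareFree_fin_two hR hAsf hRsf

/-- Every nonempty binary word has exactly one square-free reduct. -/
theorem binary_unique_reduct (W : List (Fin 2)) (hW : W ≠ []) :
    (Reducts W).ncard = 1 :=
  binary_unique_reduct_general W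
end

section
/- The morphism φ over the alphabet {a,b,c} defined by φ(a) = abacabcbacabacbabc, φ(b) = abacabcbacbcacbabc, φ(c) = abacbcacbacabcbabc is square-free: the image under φ of every square-free word over {a,b,c} is square-free. -/
/-!
`φ` is uniform of length 18. A square `XX` in `φ(W)` with `|X| ≤ 34` lies inside the image of a
factor of `W` of length at most 5, and these finitely many cases are checked by evaluation.
For longer `X`, the second copy of `X` contains a whole block `φ(W[k])`; its copy in the first `X`
must also be aligned on block boundaries, because no `φ(z)` occurs in `φ(x)φ(y)` at a nonzero
offset. So `18 ∣ |X|`, and the full blocks in the two halves of the square match, hence so do the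
letters of `W` they come from (`φ` is injective). At the two ends only partial blocks remain; a
third finite check shows that if `φ(x), φ(y)` agree after position `t` and `φ(y), φ(z)` agree up
to position `t`, then `x = y` or `y = z`. Either way the square of `φ(W)` comes from a square
of `W`.
-/

section Squares

variable {α : Type*}

theorem squareFree_iff_forall_mem_tails {l : List α} :
    SquareFree l ↔ ∀ s ∈ l.tails, ∀ n ∈ List.range (s.length / 2),
      s.take (n + 1) ≠ (s.drop (n + 1)).take (n + 1) := by
  simp only [List.mem_tails, List.mem_range]
  constructor
  · intro hl s hs n hn heq
    refine hl (s.take (n + 1)) (List.ne_nil_of_length_pos (by simp; omega)) ?_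
    have : s.take (n + 1) ++ s.take (n + 1) = s.take (n + 1 + (n + 1)) := by
      rw [List.take_add (i := n + 1) (j := n + 1), ← heq]
    exact this ▸ (List.take_prefix _ s).isInfix.trans hs.isInfix
  · intro h X hX hXX
    obtain ⟨s, ⟨V, rfl⟩, hs⟩ := List.infix_iff_prefix_suffix.mp hXX
    have hpos : X.length ≠ 0 := by simpa using hX
    refine h _ hs (X.length - 1) (by simp; omega) ?_
    rw [Nat.sub_add_cancel (by omega), List.append_assoc, List.drop_left,
      List.take_left' rfl, List.take_left' rfl]

instance [DecidableEq α] : DecidablePred (SquareFree (α := α)) :=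
  fun _ => decidable_of_iff _ squareFree_iff_forall_mem_tails.symm

theorem squareFree_nil : SquareFree ([] : List α) := by
  intro X hX hXX
  exact hX (List.append_eq_nil_iff.mp (List.eq_nil_of_infix_nil hXX)).1

theorem SquareFree.of_infix {l u : List α} (hl : SquareFree l) (hu : u <:+: l) :
    SquareFree u :=
  fun X hX hXX => hl X hX (hXX.trans hu)

theorem take_drop_infix (l : List α) (i n : ℕ) : (l.drop i).take n <:+: l :=
  (List.take_prefix n _).isInfix.trans (List.drop_suffix i l).isInfix

theorem not_squareFree_of_getElem?_eq {W : List α} {k m : ℕ} (hm : 0 < m)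
    (hk : k + 2 * m ≤ W.length) (h : ∀ i < m, W[k + i + m]? = W[k + i]?) :
    ¬ SquareFree W := by
  intro hW
  have hrep : (W.drop (k + m)).take m = (W.drop k).take m := by
    refine List.ext_getElem? fun i => ?_
    simp only [List.getElem?_take, List.getElem?_drop]
    split_ifs with hi
    · rw [Nat.add_right_comm]
      exact h i hi
    · rfl
  have hsq : (W.drop k).take m ++ (W.drop k).take m = (W.drop k).take (m + m) := by
    rw [List.take_add, List.drop_drop, hrep]
  refine hW ((W.drop k).take m) (List.ne_nil_of_length_pos (by simp; omega)) ?_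
  exact hsq ▸ take_drop_infix W k (m + m)

theorem getElem?_add_length_of_eq_square {w U X V : List α} (hw : w = U ++ (X ++ X) ++ V)
    {i : ℕ} (h₁ : U.length ≤ i) (h₂ : i < U.length + X.length) :
    w[i + X.length]? = w[i]? := by
  have hd : w.drop U.length = X ++ (X ++ V) := by simp [hw]
  obtain ⟨r, rfl⟩ := Nat.exists_eq_add_of_le h₁
  rw [Nat.add_assoc, ← List.getElem?_drop (j := r + X.length), ← List.getElem?_drop (j := r),
    hd, List.getElem?_append_right (by omega), Nat.add_sub_cancel,
    List.getElem?_append_left (by omega), List.getElem?_append_left (by omega)]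

theorem take_drop_add_length_of_eq_square {w U X V : List α} (hw : w = U ++ (X ++ X) ++ V)
    {i b : ℕ} (h₁ : U.length ≤ i) (h₂ : i + b ≤ U.length + X.length) :
    (w.drop (i + X.length)).take b = (w.drop i).take b := by
  refine List.ext_getElem? fun j => ?_
  simp only [List.getElem?_take, List.getElem?_drop]
  split_ifs with hj
  · rw [show i + X.length + j = i + j + X.length by omega]
    exact getElem?_add_length_of_eq_square hw (by omega) (by omega)
  · rfl

end Squares

section UniformMorphism

variable {α β : Type*}

abbrev Synchronizing (h : α → List β) (L : ℕ) : Prop :=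
  ∀ x y z, ∀ o < L, 0 < o → ((h x ++ h y).drop o).take L ≠ h z

abbrev NoMixedImage (h : α → List β) (L : ℕ) : Prop :=
  ∀ x y z, ∀ t < L, 0 < t →
    (h x).drop t = (h y).drop t → (h y).take t = (h z).take t → x = y ∨ y = z

variable {h : α → List β} {L : ℕ}

theorem length_flatMap_of_length_eq (hL : ∀ a, (h a).length = L) (W : List α) :
    (W.flatMap h).length = L * W.length := by
  induction W with
  | nil => simp
  | cons a W ih => simp [ih, hL, Nat.mul_succ, Nat.add_comm]

theorem drop_mul_flatMap (hL : ∀ a, (h a).length = L) (W : List α) (k : ℕ) :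
    (W.flatMap h).drop (L * k) = (W.drop k).flatMap h := by
  induction W generalizing k with
  | nil => simp
  | cons a W ih =>
    cases k with
    | zero => simp
    | succ k =>
      rw [List.flatMap_cons, Nat.mul_succ, Nat.add_comm, ← List.drop_drop, ← hL a,
        List.drop_left, hL, ih, List.drop_succ_cons]

theorem take_mul_flatMap (hL : ∀ a, (h a).length = L) (W : List α) (k : ℕ) :
    (W.flatMap h).take (L * k) = (W.take k).flatMap h := by
  induction W generalizing k with
  | nil => simp
  | cons a W ih =>
    cases k with
    | zero => simp
    | succ k =>
      rw [List.flatMap_cons, Nat.mul_succ, Nat.add_comm, List.take_add, ← hL a,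
        List.take_left' rfl, List.drop_left, hL, ih, List.take_succ_cons, List.flatMap_cons]

theorem take_drop_flatMap (hL : ∀ a, (h a).length = L) (W : List α) (k : ℕ) {r b c : ℕ}
    (hrb : r + b ≤ L * c) :
    ((W.flatMap h).drop (L * k + r)).take b =
      ((((W.drop k).take c).flatMap h).drop r).take b := by
  rw [← take_mul_flatMap hL, ← drop_mul_flatMap hL, List.drop_take, List.take_take,
    List.drop_drop, min_eq_left (by omega)]

theorem take_drop_mul_flatMap (hL : ∀ a, (h a).length = L) {W : List α} {k : ℕ}
    (hk : k < W.length) : ((W.flatMap h).drop (L * k)).take L = h W[k] := by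
  rw [drop_mul_flatMap hL, List.drop_eq_getElem_cons hk, List.flatMap_cons,
    List.take_left' (hL _)]

theorem exists_infix_flatMap_of_infix (hL : ∀ a, (h a).length = L) (hL₀ : 0 < L)
    {W : List α} {Y : List β} {c : ℕ} (hY : Y <:+: W.flatMap h)
    (hc : Y.length + L ≤ L * c + 1) :
    ∃ t, t <:+: W ∧ t.length ≤ c ∧ Y <:+: t.flatMap h := by
  obtain ⟨U, V, hw⟩ := hY
  have hY : Y = ((W.flatMap h).drop (L * (U.length / L) + U.length % L)).take Y.length := by
    rw [Nat.div_add_mod, ← hw, List.append_assoc, List.drop_left, List.take_left' rfl]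
  have hr := Nat.mod_lt U.length hL₀
  refine ⟨(W.drop (U.length / L)).take c, take_drop_infix _ _ _, List.length_take_le _ _, ?_⟩
  rw [hY, take_drop_flatMap hL _ _ (c := c) (by omega)]
  exact take_drop_infix _ _ _

theorem length_eq_of_eq_square_flatMap (hL : ∀ a, (h a).length = L) {W : List α}
    {U X V : List β} (hw : W.flatMap h = U ++ (X ++ X) ++ V) :
    U.length + 2 * X.length + V.length = L * W.length := by
  rw [← length_flatMap_of_length_eq hL, hw]
  simp only [List.length_append]
  omega

theorem dvd_length_of_eq_square_flatMap (hL : ∀ a, (h a).length = L) (hL₀ : 0 < L)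
    (hsync : Synchronizing h L)
    {W : List α} {U X V : List β} (hw : W.flatMap h = U ++ (X ++ X) ++ V)
    (hX : 2 * L ≤ X.length + 1) : L ∣ X.length := by
  have hlen := length_eq_of_eq_square_flatMap hL hw
  -- block `k` is the first one starting in the second `X`; since `2 * L ≤ |X| + 1`,
  -- it also ends there
  obtain ⟨k, hk₁, hk₂⟩ :
      ∃ k, U.length + X.length ≤ L * k ∧ L * k < U.length + X.length + L := by
    have := Nat.div_add_mod (U.length + X.length + L - 1) L
    have := Nat.mod_lt (U.length + X.length + L - 1) hL₀
    exact ⟨(U.length + X.length + L - 1) / L, by omega, by omega⟩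
  have hkW : k < W.length := Nat.lt_of_mul_lt_mul_left (a := L) (by omega)
  obtain ⟨j, o, ho, hi⟩ : ∃ j o, o < L ∧ L * j + o = L * k - X.length :=
    ⟨_, _, Nat.mod_lt _ hL₀, Nat.div_add_mod _ _⟩
  have hjk : j < k := Nat.lt_of_mul_lt_mul_left (a := L) (by omega)
  have hshift :
      ((W.flatMap h).drop (L * j + o)).take L = ((W.flatMap h).drop (L * k)).take L := by
    rw [hi, ← take_drop_add_length_of_eq_square hw (by omega) (by omega),
      Nat.sub_add_cancel (by omega)]
  -- the copy of block `k` in the first `X` starts at offset `o` in block `j`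
  have hcopy : ((h W[j] ++ h W[j + 1]).drop o).take L = h W[k] := by
    rw [← take_drop_mul_flatMap hL hkW, ← hshift, take_drop_flatMap hL W j (c := 2) (by omega),
      List.drop_eq_getElem_cons (l := W) (i := j) (by omega),
      List.drop_eq_getElem_cons (l := W) (i := j + 1) (by omega)]
    simp only [List.take_succ_cons, List.take_zero, List.flatMap_cons, List.flatMap_nil,
      List.append_nil]
  by_cases ho₀ : o = 0
  · exact ⟨k - j, by rw [Nat.mul_sub]; omega⟩
  · exact absurd hcopy (hsync _ _ _ o ho (Nat.pos_of_ne_zero ho₀))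

theorem getElem?_add_eq_of_eq_square_flatMap (hL : ∀ a, (h a).length = L) (hL₀ : 0 < L)
    (hinj : Function.Injective h) {W : List α} {U X V : List β}
    (hw : W.flatMap h = U ++ (X ++ X) ++ V) {m k : ℕ} (hX : X.length = L * m)
    (hk₁ : U.length ≤ L * k) (hk₂ : L * k + L ≤ U.length + X.length) :
    W[k + m]? = W[k]? := by
  have hlen := length_eq_of_eq_square_flatMap hL hw
  have hkm : k + m < W.length := Nat.lt_of_mul_lt_mul_left (a := L) (by rw [Nat.mul_add]; omega)
  have hk : k < W.length := by omega
  rw [List.getElem?_eq_getElem hkm, List.getElem?_eq_getElem hk, Option.some_inj]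
  apply hinj
  rw [← take_drop_mul_flatMap hL hkm, ← take_drop_mul_flatMap hL hk, Nat.mul_add, ← hX,
    take_drop_add_length_of_eq_square hw hk₁ hk₂]

theorem getElem?_eq_or_of_eq_square_flatMap (hL : ∀ a, (h a).length = L)
    (hmix : NoMixedImage h L)
    {W : List α} {U X V : List β} (hw : W.flatMap h = U ++ (X ++ X) ++ V) {m q t : ℕ}
    (hX : X.length = L * m) (hm : 0 < m) (hU : U.length = L * q + t) (ht₀ : 0 < t) (ht : t < L) :
    W[q + m]? = W[q]? ∨ W[q + 2 * m]? = W[q + m]? := by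
  have hlen := length_eq_of_eq_square_flatMap hL hw
  have hLm : L ≤ L * m := Nat.le_mul_of_pos_right L hm
  have hq : q + 2 * m < W.length := Nat.lt_of_mul_lt_mul_left (a := L) (by
    rw [show L * (q + 2 * m) = L * q + 2 * (L * m) by ring]; omega)
  have hdrop : (h W[q]).drop t = (h W[q + m]).drop t := by
    rw [← take_drop_mul_flatMap hL (by omega), ← take_drop_mul_flatMap hL (by omega),
      List.drop_take, List.drop_take, List.drop_drop, List.drop_drop,
      show L * (q + m) + t = L * q + t + X.length by rw [Nat.mul_add]; omega, ← hU,
      take_drop_add_length_of_eq_square hw le_rfl (by omega)]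
  have htake : (h W[q + m]).take t = (h W[q + 2 * m]).take t := by
    rw [← take_drop_mul_flatMap hL (by omega), ← take_drop_mul_flatMap hL hq,
      List.take_take, List.take_take, min_eq_left ht.le,
      show L * (q + 2 * m) = L * (q + m) + X.length by rw [hX]; ring,
      take_drop_add_length_of_eq_square hw (by rw [Nat.mul_add]; omega)
        (by rw [Nat.mul_add]; omega)]
  rw [List.getElem?_eq_getElem (by omega), List.getElem?_eq_getElem (by omega),
    List.getElem?_eq_getElem hq, Option.some_inj, Option.some_inj, eq_comm,
    eq_comm (a := W[q + 2 * m])]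
  exact hmix _ _ _ t ht ht₀ hdrop htake

theorem not_squareFree_of_eq_square_flatMap (hL : ∀ a, (h a).length = L) (hL₀ : 0 < L)
    (hinj : Function.Injective h)
    (hmix : NoMixedImage h L)
    {W : List α} {U X V : List β} (hw : W.flatMap h = U ++ (X ++ X) ++ V) {m : ℕ}
    (hX : X.length = L * m) (hm : 0 < m) : ¬ SquareFree W := by
  have hlen := length_eq_of_eq_square_flatMap hL hw
  obtain ⟨q, t, ht, hU⟩ : ∃ q t, t < L ∧ U.length = L * q + t :=
    ⟨_, _, Nat.mod_lt _ hL₀, (Nat.div_add_mod _ _).symm⟩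
  have hfit : L * (q + 2 * m) + t ≤ L * W.length := by
    rw [show L * (q + 2 * m) = L * q + 2 * (L * m) by ring]; omega
  have hq : q + 2 * m ≤ W.length := Nat.le_of_mul_le_mul_left (by omega) hL₀
  have hblock : ∀ i < m, 0 < i ∨ t = 0 → W[q + i + m]? = W[q + i]? := by
    intro i hi hit
    have h₁ : L * (i + 1) ≤ L * m := Nat.mul_le_mul_left L hi
    have h₂ : L ≤ L * i ∨ t = 0 := hit.imp_left (Nat.le_mul_of_pos_right L)
    refine getElem?_add_eq_of_eq_square_flatMap hL hL₀ hinj hw hX ?_ ?_ <;>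
      rw [Nat.mul_add] at * <;> omega
  rcases Nat.eq_zero_or_pos t with rfl | ht₀
  · exact not_squareFree_of_getElem?_eq hm hq fun i hi => hblock i hi (Or.inr rfl)
  rcases getElem?_eq_or_of_eq_square_flatMap hL hmix hw hX hm hU ht₀ ht with hq₀ | hq₁
  · refine not_squareFree_of_getElem?_eq hm hq fun i hi => ?_
    rcases Nat.eq_zero_or_pos i with rfl | hi₀
    · exact hq₀
    · exact hblock i hi (Or.inl hi₀)
  · have hq' : q + 2 * m < W.length := Nat.lt_of_mul_lt_mul_left (a := L) (by omega)
    refine not_squareFree_of_getElem?_eq (k := q + 1) hm (by omega) fun i hi => ?_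
    by_cases hlast : i + 1 = m
    · rw [show q + 1 + i + m = q + 2 * m by omega, show q + 1 + i = q + m by omega]
      exact hq₁
    · rw [Nat.add_assoc q 1 i]
      exact hblock (1 + i) (by omega) (Or.inl (by omega))

theorem squareFree_flatMap_of_uniform (hL : ∀ a, (h a).length = L)
    (hinj : Function.Injective h)
    (hsync : Synchronizing h L)
    (hmix : NoMixedImage h L)
    (hshort : ∀ t : List α, t.length ≤ 5 → SquareFree t → SquareFree (t.flatMap h))
    {W : List α} (hW : SquareFree W) : SquareFree (W.flatMap h) := by
  rcases Nat.eq_zero_or_pos L with rfl | hL₀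
  · have hnil : W.flatMap h = [] :=
      List.eq_nil_of_length_eq_zero (by rw [length_flatMap_of_length_eq hL, Nat.zero_mul])
    exact hnil ▸ squareFree_nil
  intro X hX ⟨U, V, hw⟩
  by_cases hlong : 2 * L ≤ X.length + 1
  · obtain ⟨m, hm⟩ := dvd_length_of_eq_square_flatMap hL hL₀ hsync hw.symm hlong
    have hm₀ : 0 < m :=
      Nat.pos_of_ne_zero fun h₀ => hX (List.eq_nil_of_length_eq_zero (by simp [hm, h₀]))
    exact not_squareFree_of_eq_square_flatMap hL hL₀ hinj hmix hw.symm hm hm₀ hW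
  · obtain ⟨t, htW, ht, hXt⟩ := exists_infix_flatMap_of_infix hL hL₀ (c := 5) ⟨U, V, hw⟩
      (by simp only [List.length_append]; omega)
    exact hshort t ht (hW.of_infix htW) X hX hXt

end UniformMorphism

theorem mem_sections_replicate {α : Type*} {l t : List α} (ht : ∀ a ∈ t, a ∈ l) :
    t ∈ (List.replicate t.length l).sections := by
  induction t with
  | nil => simp
  | cons a t ih =>
    rw [List.mem_sections] at ih ⊢
    simp only [List.length_cons, List.replicate_succ, List.forall₂_cons]
    exact ⟨ht a (by simp), ih fun b hb => ht b (by simp [hb])⟩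

set_option synthInstance.maxSize 256 in
set_option maxRecDepth 100000 in
set_option maxHeartbeats 4000000 in
/-- The letters `a`, `b`, `c` are encoded as `0`, `1`, `2 : Fin 3`. -/
theorem phi_squarefree_morphism
    (φ : Fin 3 → List (Fin 3))
    (hφ : φ = ![[0,1,0,2,0,1,2,1,0,2,0,1,0,2,1,0,1,2],
                [0,1,0,2,0,1,2,1,0,2,1,2,0,2,1,0,1,2],
                [0,1,0,2,1,2,0,2,1,0,2,0,1,2,1,0,1,2]]) :
    ∀ W : List (Fin 3), SquareFree W → SquareFree (W.flatMap φ) := by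
  have hL : ∀ a, (φ a).length = 18 := by subst hφ; decide
  have hinj : Function.Injective φ := by subst hφ; decide
  have hsync : Synchronizing φ 18 := by subst hφ; decide
  have hmix : NoMixedImage φ 18 := by subst hφ; decide
  -- `(List.replicate n (List.finRange 3)).sections` lists all words of length `n`
  have hcheck : ∀ n ∈ List.range 6, ∀ t ∈ (List.replicate n (List.finRange 3)).sections,
      SquareFree t → SquareFree (t.flatMap φ) := by
    subst hφ; decide
  have hshort :
      ∀ t : List (Fin 3), t.length ≤ 5 → SquareFree t → SquareFree (t.flatMap φ) :=
    fun t ht => hcheck t.length (List.mem_range.mpr (by omega)) t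
      (mem_sections_replicate fun a _ => List.mem_finRange a)
  exact fun W => squareFree_flatMap_of_uniform hL hinj hsync hmix hshort
end

section
/- Let A = abacabcbacabacbabc, B = abacabcbacbcacbabc, and D = abacabcbabcbabacabacacbcacbabcbababc, words over the alphabet {a,b,c}. Then D can be transformed into A by a finite sequence of square reductions, and D can also be transformed into B by a finite sequence of square reductions. -/
namespace Reaches

variable {α : Type*}

instance : Trans (@Reaches α) (@Reaches α) (@Reaches α) := ⟨Relation.ReflTransGen.trans⟩

theorem square (U X V : List α) (hX : X ≠ [] := by simp) :
    Reaches (U ++ X ++ X ++ V) (U ++ X ++ V) :=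
  .single ⟨U, X, V, hX, by simp, rfl⟩

end Reaches

theorem D_reaches_A :
    Reaches ([0,1,0,2,0,1,2,1,0,1,2,1,0,1,0,2,0,1,0,2,0,2,1,2,0,2,1,0,1,2,1,0,1,0,1,2] : List (Fin 3))
      [0,1,0,2,0,1,2,1,0,2,0,1,0,2,1,0,1,2] :=
  calc ([0,1,0,2,0,1,2,1,0,1,2,1,0,1,0,2,0,1,0,2,0,2,1,2,0,2,1,0,1,2,1,0,1,0,1,2] : List (Fin 3))
      Reaches _ [0,1,0,2,0,1,2,1,0,1,2,1,0,2,0,1,0,2,0,2,1,2,0,2,1,0,1,2,1,0,1,0,1,2] :=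
        .square [0,1,0,2,0,1,2,1,0,1,2] [1,0] _
      Reaches _ [0,1,0,2,0,1,2,1,0,1,2,1,0,2,0,1,0,2,0,2,1,2,0,2,1,0,1,2,1,0,1,2] :=
        .square [0,1,0,2,0,1,2,1,0,1,2,1,0,2,0,1,0,2,0,2,1,2,0,2,1,0,1,2] [1,0] _
      Reaches _ [0,1,0,2,0,1,2,1,0,1,2,1,0,2,0,1,0,2,0,2,1,2,0,2,1,0,1,2] :=
        .square [0,1,0,2,0,1,2,1,0,1,2,1,0,2,0,1,0,2,0,2,1,2,0,2] [1,0,1,2] _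
      Reaches _ [0,1,0,2,0,1,2,1,0,2,0,1,0,2,0,2,1,2,0,2,1,0,1,2] :=
        .square [0,1,0,2,0] [1,2,1,0] _
      Reaches _ [0,1,0,2,0,1,2,1,0,2,0,1,0,2,0,2,1,0,1,2] :=
        .square [0,1,0,2,0,1,2,1,0,2,0,1,0] [2,0,2,1] _
      Reaches _ [0,1,0,2,0,1,2,1,0,2,0,1,0,2,1,0,1,2] :=
        .square [0,1,0,2,0,1,2,1,0,2,0,1] [0,2] _

theorem D_reaches_B :
    Reaches ([0,1,0,2,0,1,2,1,0,1,2,1,0,1,0,2,0,1,0,2,0,2,1,2,0,2,1,0,1,2,1,0,1,0,1,2] : List (Fin 3))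
      [0,1,0,2,0,1,2,1,0,2,1,2,0,2,1,0,1,2] :=
  calc ([0,1,0,2,0,1,2,1,0,1,2,1,0,1,0,2,0,1,0,2,0,2,1,2,0,2,1,0,1,2,1,0,1,0,1,2] : List (Fin 3))
      Reaches _ [0,1,0,2,0,1,2,1,0,1,2,1,0,1,0,2,0,1,0,2,1,2,0,2,1,0,1,2,1,0,1,0,1,2] :=
        .square [0,1,0,2,0,1,2,1,0,1,2,1,0,1,0,2,0,1] [0,2] _
      Reaches _ [0,1,0,2,0,1,2,1,0,1,0,2,0,1,0,2,1,2,0,2,1,0,1,2,1,0,1,0,1,2] :=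
        .square [0,1,0,2] [0,1,2,1] _
      Reaches _ [0,1,0,2,0,1,2,1,0,1,0,2,0,1,0,2,1,2,0,2,1,0,1,2,1,0,1,2] :=
        .square [0,1,0,2,0,1,2,1,0,1,0,2,0,1,0,2,1,2,0,2,1,0,1,2] [1,0] _
      Reaches _ [0,1,0,2,0,1,2,1,0,1,0,2,0,1,0,2,1,2,0,2,1,0,1,2] :=
        .square [0,1,0,2,0,1,2,1,0,1,0,2,0,1,0,2,1,2,0] [2,1,0,1] _
      Reaches _ [0,1,0,2,0,1,2,1,0,1,0,2,1,2,0,2,1,0,1,2] :=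
        .square [0,1,0,2,0,1,2,1] [0,1,0,2] _
      Reaches _ [0,1,0,2,0,1,2,1,0,2,1,2,0,2,1,0,1,2] :=
        .square [0,1,0,2,0,1,2] [1,0] _

/-- The word `D = abacabcbabcbabacabacacbcacbabcbababc` reduces (by square reductions)
both to `A = abacabcbacabacbabc` and to `B = abacabcbacbcacbabc`
(letters encoded in `Fin 3` as `a = 0`, `b = 1`, `c = 2`). -/
theorem D_reduces_to_A_and_B
    (A B D : List (Fin 3))
    (hA : A = [0,1,0,2,0,1,2,1,0,2,0,1,0,2,1,0,1,2])
    (hB : B = [0,1,0,2,0,1,2,1,0,2,1,2,0,2,1,0,1,2])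
    (hD : D = [0,1,0,2,0,1,2,1,0,1,2,1,0,1,0,2,0,1,0,2,0,2,1,2,0,2,1,0,1,2,1,0,1,0,1,2]) :
    Reaches D A ∧ Reaches D B := by
  subst hA hB hD
  exact ⟨D_reaches_A, D_reaches_B⟩
end

section
/- The word F = xabaxababx over the alphabet {a,b,x,y} has exactly two distinct square-free reducts, namely P = xabx and Q = xabaxabx. -/
def squareReductions {α : Type*} [DecidableEq α] (W : List α) : List (List α) :=
  (List.range (W.length + 1)).flatMap fun i =>
    (List.range (W.length + 1)).filterMap fun l =>
      if l ≠ 0 ∧ (W.drop i).take l = (W.drop (i + l)).take l ∧ i + 2 * l ≤ W.length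
      then some (W.take i ++ (W.drop i).take l ++ W.drop (i + 2 * l))
      else none

theorem Step.mem_squareReductions {α : Type*} [DecidableEq α] {W W' : List α}
    (h : Step W W') : W' ∈ squareReductions W := by
  obtain ⟨U, X, V, hX, rfl, rfl⟩ := h
  have hdrop : (U ++ (X ++ X) ++ V).drop U.length = X ++ (X ++ V) := by simp
  have hdrop' : (U ++ (X ++ X) ++ V).drop (U.length + X.length) = X ++ V := by
    rw [← List.drop_drop, hdrop, List.drop_left]
  simp only [squareReductions, List.mem_flatMap, List.mem_filterMap, List.mem_range]
  refine ⟨U.length, by simp, X.length, by simp; omega, ?_⟩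
  rw [if_pos ⟨by simpa using hX, by rw [hdrop, hdrop']; simp, by simp; omega⟩]
  rw [hdrop, two_mul, ← add_assoc, ← List.drop_drop, hdrop']
  simp

theorem Reaches.mem_of_closed {α : Type*} [DecidableEq α] {S : List (List α)} {W R : List α}
    (hS : ∀ V ∈ S, ∀ V' ∈ squareReductions V, V' ∈ S) (hW : W ∈ S) (h : Reaches W R) :
    R ∈ S := by
  induction h with
  | refl => exact hW
  | tail _ hstep ih => exact hS _ ih _ hstep.mem_squareReductions

theorem squareFree_iff_sublists {α : Type*} (W : List α) :
    SquareFree W ↔ ∀ X ∈ W.sublists, X ≠ [] → ¬ (X ++ X) <:+: W :=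
  ⟨fun h X _ => h X, fun h X hX hXX =>
    h X (List.mem_sublists.2 ((List.prefix_append X X).isInfix.trans hXX).sublist) hX hXX⟩

set_option maxRecDepth 10000 in
/-- The letters are encoded in `Fin 4` as `a = 0`, `b = 1`, `x = 2`, `y = 3`. -/
theorem F_two_reducts :
    Reducts ([2,0,1,0,2,0,1,0,1,2] : List (Fin 4)) =
      {[2,0,1,2], [2,0,1,0,2,0,1,2]} ∧
    ([2,0,1,2] : List (Fin 4)) ≠ [2,0,1,0,2,0,1,2] := by
  have hreach (R : List (Fin 4)) (h : Reaches [2,0,1,0,2,0,1,0,1,2] R) :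
      R ∈ [[2,0,1,0,2,0,1,0,1,2], [2,0,1,0,2,0,1,2], [2,0,1,0,1,2], [2,0,1,2]] :=
    h.mem_of_closed (by decide) (by decide)
  have habab {W : List (Fin 4)} (h : [0,1,0,1] <:+: W) : ¬ SquareFree W :=
    fun hW => hW [0,1] (by decide) h
  refine ⟨Set.ext fun R => ⟨fun ⟨hR, hsf⟩ => ?_, ?_⟩, by decide⟩
  · have hR := hreach R hR
    simp only [List.mem_cons, List.not_mem_nil, or_false] at hR
    rcases hR with rfl | rfl | rfl | rfl
    · exact absurd hsf (habab (by decide))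
    · exact .inr rfl
    · exact absurd hsf (habab (by decide))
    · exact .inl rfl
  · rintro (rfl | rfl)
    · exact ⟨.head ⟨[], [2,0,1,0], [1,2], by decide, rfl, rfl⟩
        (.single ⟨[2], [0,1], [2], by decide, rfl, rfl⟩),
        (squareFree_iff_sublists _).2 (by decide)⟩
    · exact ⟨.single ⟨[2,0,1,0,2], [0,1], [2], by decide, rfl, rfl⟩,
        (squareFree_iff_sublists _).2 (by decide)⟩
end

section
/- Let F = xabaxababx, P = xabx, Q = xabaxabx over the alphabet {a,b,x,y}. Let W_∞ be an infinite square-free word over {a,b,y} starting with the letter y, and let W_1, W_2, … be prefixes of W_∞ of strictly increasing lengths, each ending with the letter y. For i ≥ 1 set S_i = F W_1 F W_2 ⋯ F W_i. Then the set of square-free reducts of S_i is exactly {P W_i, Q W_i} ∪ {P W_j Q W_i : 1 ≤ j ≤ i−1}; in particular r(S_i) = i + 1. -/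
section Words

variable {α : Type*}

lemma Step.not_squareFree {W W' : List α} (h : Step W W') : ¬ SquareFree W := by
  obtain ⟨U, X, V, hX, rfl, -⟩ := h
  exact fun hW => hW X hX ⟨U, V, rfl⟩

lemma squareFree_iff_forall_not_step {W : List α} : SquareFree W ↔ ∀ W', ¬ Step W W' := by
  refine ⟨fun hW W' h => h.not_squareFree hW, fun h X hX ⟨U, V, hW⟩ => h (U ++ X ++ V) ?_⟩
  exact ⟨U, X, V, hX, hW.symm, rfl⟩

lemma Step.append_left {W W' : List α} (h : Step W W') (A : List α) : Step (A ++ W) (A ++ W') := by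
  obtain ⟨U, X, V, hX, rfl, rfl⟩ := h
  exact ⟨A ++ U, X, V, hX, by simp, by simp⟩

/-- For a fixed short word `w` this turns `Step w w'` into a decidable condition. -/
lemma Step.exists_index {w w' : List α} (h : Step w w') :
    ∃ i < w.length, ∃ n < w.length + 1,
      (0 < n ∧ i + 2 * n ≤ w.length ∧ (w.drop i).take n = (w.drop (i + n)).take n) ∧
      w' = w.take (i + n) ++ w.drop (i + 2 * n) := by
  obtain ⟨U, X, V, hX, rfl, rfl⟩ := h
  have hn := List.length_pos_iff.2 hX
  refine ⟨U.length, by simp; omega, X.length, by simp; omega, ⟨hn, by simp; omega, ?_⟩, ?_⟩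
  · simp [List.drop_append, List.take_append]
  · rw [show U ++ (X ++ X) ++ V = (U ++ X) ++ (X ++ V) by simp, List.take_left' (by simp),
      show U.length + 2 * X.length = (U ++ X).length + X.length by simp; omega,
      ← List.drop_drop, List.drop_left, List.drop_left]

end Words

lemma List.exists_of_flatMap_eq_append_cons {α β : Type*} {f : α → List β} {l : List α}
    {A B : List β} {u : β} (h : l.flatMap f = A ++ u :: B) :
    ∃ l₁ a l₂ s₁ s₂, l = l₁ ++ a :: l₂ ∧ f a = s₁ ++ u :: s₂ ∧ A = l₁.flatMap f ++ s₁ ∧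
      B = s₂ ++ l₂.flatMap f := by
  induction l generalizing A with
  | nil => simp at h
  | cons a l ih =>
    rw [List.flatMap_cons] at h
    rcases List.append_eq_append_iff.1 h with ⟨m, rfl, hm⟩ | ⟨_ | ⟨b, m⟩, hfa, hB⟩
    · obtain ⟨l₁, a', l₂, s₁, s₂, rfl, hf, rfl, rfl⟩ := ih hm
      exact ⟨a :: l₁, a', l₂, s₁, s₂, rfl, hf, by simp, rfl⟩
    · obtain ⟨l₁, a', l₂, s₁, s₂, rfl, hf, hA, rfl⟩ := ih (A := []) (by simpa using hB.symm)
      obtain ⟨h₁, rfl⟩ := List.append_eq_nil_iff.1 hA.symm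
      exact ⟨a :: l₁, a', l₂, [], s₂, rfl, hf, by simp [hfa, h₁], rfl⟩
    · obtain ⟨rfl, rfl⟩ := List.cons_eq_cons.1 hB
      exact ⟨[], a, l, A, m, rfl, hfa, by simp, rfl⟩

lemma List.append_singleton_eq_append_cons {α : Type*} {A s₁ s₂ : List α} {w u : α}
    (h : A ++ [w] = s₁ ++ u :: s₂) :
    (s₁ = A ∧ u = w ∧ s₂ = []) ∨ ∃ t, A = s₁ ++ u :: t ∧ s₂ = t ++ [w] := by
  rcases List.eq_nil_or_concat s₂ with rfl | ⟨t, b, rfl⟩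
  · obtain ⟨rfl, h⟩ := List.append_inj' h rfl
    exact .inl ⟨rfl, by simpa using h.symm, rfl⟩
  · rw [List.concat_eq_append, ← List.cons_append, ← List.append_assoc] at h
    obtain ⟨rfl, h⟩ := List.append_inj' h rfl
    exact .inr ⟨t, rfl, by simp_all⟩

lemma List.prefix_or_getLast?_eq_of_suffix {α : Type*} {v β w A : List α} (hβ : β <:+ A) :
    v ++ β <+: v ++ w ∨ (v ++ β).getLast? = A.getLast? := by
  rcases List.eq_nil_or_concat β with rfl | ⟨β, a, rfl⟩
  · simp
  · obtain ⟨r, rfl⟩ := hβ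
    simp [← List.append_assoc]

lemma lt_snd_of_pairwise_map_snd {α : Type*} {σ σ₁ σ₂ : List (α × ℕ)} {c : α} {j : ℕ}
    (hσ : (σ.map Prod.snd).Pairwise (· < ·)) (h : σ = σ₁ ++ (c, j) :: σ₂) : ∀ p ∈ σ₂, j < p.2 := by
  subst h
  simp only [List.map_append, List.map_cons, List.pairwise_append, List.pairwise_cons,
    List.mem_map] at hσ
  exact fun p hp => hσ.2.1.1 _ ⟨p, hp, rfl⟩

section JoinSep

variable {α : Type*} {x : α}

variable (x) in
def joinSep (L : List (List α)) : List α := L.flatMap (x :: ·)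

@[simp] lemma joinSep_nil : joinSep x [] = [] := rfl

@[simp] lemma joinSep_cons (u : List α) (L : List (List α)) :
    joinSep x (u :: L) = x :: u ++ joinSep x L := rfl

@[simp] lemma joinSep_append (L₁ L₂ : List (List α)) :
    joinSep x (L₁ ++ L₂) = joinSep x L₁ ++ joinSep x L₂ :=
  List.flatMap_append

lemma exists_joinSep_eq_cons {L : List (List α)} (hL : L ≠ []) : ∃ t, joinSep x L = x :: t := by
  cases L <;> simp_all

lemma exists_of_append_eq_append_joinSep {A T u : List α} {L : List (List α)} (hA : x ∉ A)
    (h : A ++ T = u ++ joinSep x L) : ∃ r, u = A ++ r ∧ T = r ++ joinSep x L := by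
  rcases List.append_eq_append_iff.1 h with ⟨r, hu, hT⟩ | ⟨_ | ⟨a, m⟩, rfl, hL⟩
  · exact ⟨r, hu, hT⟩
  · exact ⟨[], by simp, by simpa using hL.symm⟩
  · obtain ⟨t, ht⟩ := exists_joinSep_eq_cons (x := x) (L := L) (by rintro rfl; simp at hL)
    rw [ht, List.cons_append, List.cons.injEq] at hL
    exact absurd (by simp [hL.1]) hA

lemma append_joinSep_inj {u u' : List α} {L L' : List (List α)} (hu : x ∉ u) (hu' : x ∉ u')
    (h : u ++ joinSep x L = u' ++ joinSep x L') : u = u' ∧ joinSep x L = joinSep x L' := by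
  obtain ⟨r, rfl, hr⟩ := exists_of_append_eq_append_joinSep hu h
  obtain ⟨r', hr', -⟩ := exists_of_append_eq_append_joinSep hu' h.symm
  obtain rfl : r = [] := (by simpa using congrArg List.length hr' : r = [] ∧ r' = []).1
  simpa using hr

lemma joinSep_injective {L L' : List (List α)} (hL : ∀ u ∈ L, x ∉ u) (hL' : ∀ u ∈ L', x ∉ u)
    (h : joinSep x L = joinSep x L') : L = L' := by
  induction L generalizing L' with
  | nil => cases L' <;> simp_all
  | cons u L ih =>
    cases L' with
    | nil => simp at h
    | cons u' L' =>
      simp only [joinSep_cons, List.cons_append, List.cons.injEq, true_and] at h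
      simp only [List.mem_cons, forall_eq_or_imp] at hL hL'
      obtain ⟨rfl, hJ⟩ := append_joinSep_inj hL.1 hL'.1 h
      rw [ih hL.2 hL'.2 hJ]

lemma exists_eq_append_joinSep (Z : List α) :
    ∃ β Ns, Z = β ++ joinSep x Ns ∧ x ∉ β ∧ ∀ n ∈ Ns, x ∉ n := by
  classical
  induction Z with
  | nil => exact ⟨[], [], rfl, by simp, by simp⟩
  | cons c Z ih =>
    obtain ⟨β, Ns, rfl, hβ, hNs⟩ := ih
    by_cases hc : c = x
    · exact ⟨[], β :: Ns, by simp [hc], by simp, by simpa [hβ] using hNs⟩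
    · exact ⟨c :: β, Ns, rfl, by simp [Ne.symm hc, hβ], hNs⟩

lemma joinSep_eq_append {L : List (List α)} {U T : List α} (h : joinSep x L = U ++ T) :
    (∃ L₁ L₂, L = L₁ ++ L₂ ∧ U = joinSep x L₁ ∧ T = joinSep x L₂) ∨
    ∃ L₁ u₁ u₂ L₂, L = L₁ ++ (u₁ ++ u₂) :: L₂ ∧ U = joinSep x L₁ ++ x :: u₁ ∧
      T = u₂ ++ joinSep x L₂ := by
  induction L generalizing U with
  | nil =>
    obtain ⟨rfl, rfl⟩ := List.append_eq_nil_iff.1 h.symm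
    exact .inl ⟨[], [], by simp⟩
  | cons u L ih =>
    rcases U with _ | ⟨c, U⟩
    · exact .inl ⟨[], u :: L, by simp [h]⟩
    simp only [joinSep_cons, List.cons_append, List.cons.injEq] at h
    obtain ⟨rfl, h⟩ := h
    rcases List.append_eq_append_iff.1 h with ⟨m, rfl, hm⟩ | ⟨m, rfl, rfl⟩
    · rcases ih hm with ⟨L₁, L₂, rfl, rfl, rfl⟩ | ⟨L₁, u₁, u₂, L₂, rfl, rfl, rfl⟩
      · exact .inl ⟨u :: L₁, L₂, by simp⟩
      · exact .inr ⟨u :: L₁, u₁, u₂, L₂, by simp⟩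
    · exact .inr ⟨[], U, m, L, by simp⟩

lemma joinSep_eq_append_cons {L : List (List α)} {A T : List α} (hL : ∀ u ∈ L, x ∉ u)
    (h : joinSep x L = A ++ x :: T) :
    ∃ L₁ L₂, L = L₁ ++ L₂ ∧ A = joinSep x L₁ ∧ joinSep x L₂ = x :: T := by
  rcases joinSep_eq_append h with ⟨L₁, L₂, rfl, rfl, h₂⟩ | ⟨L₁, u₁, _ | ⟨a, u₂⟩, L₂, rfl, rfl, h₂⟩
  · exact ⟨L₁, L₂, rfl, rfl, h₂.symm⟩
  · exact ⟨L₁ ++ [u₁], L₂, by simp, by simp, h₂.symm⟩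
  · obtain ⟨rfl, -⟩ := List.cons_eq_cons.1 h₂
    exact absurd (by simp) (hL (u₁ ++ x :: u₂) (by simp))

lemma joinSep_eq_append_joinSep_append {L M : List (List α)} {A T v : List α}
    (hL : ∀ u ∈ L, x ∉ u) (hM : ∀ u ∈ M, x ∉ u) (hv : x ∉ v)
    (h : joinSep x L = A ++ joinSep x (M ++ [v]) ++ T) :
    ∃ pre w L₂, L = pre ++ M ++ (v ++ w) :: L₂ ∧ A = joinSep x pre ∧ T = w ++ joinSep x L₂ := by
  obtain ⟨t, ht⟩ := exists_joinSep_eq_cons (x := x) (L := M ++ [v]) (by simp)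
  obtain ⟨pre, L', rfl, rfl, hL'⟩ :=
    joinSep_eq_append_cons (A := A) (T := t ++ T) hL (h.trans (by simp [ht]))
  have hxL' : ∀ u ∈ L', x ∉ u := fun u hu => hL u (by simp [hu])
  have hxMv : ∀ u ∈ M ++ [v], x ∉ u := by
    simpa [or_imp, forall_and, hv] using hM
  rcases joinSep_eq_append (U := joinSep x (M ++ [v])) (T := T) (by rw [hL', ht]; rfl) with
    ⟨L₃, L₄, rfl, h₃, rfl⟩ | ⟨L₃, u₁, u₂, L₄, rfl, h₃, rfl⟩
  · obtain rfl := joinSep_injective hxMv (fun u hu => hxL' u (by simp [hu])) h₃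
    exact ⟨pre, [], L₄, by simp, rfl, by simp⟩
  · have hxL₃ : ∀ u ∈ L₃ ++ [u₁], x ∉ u := by
      intro u hu
      simp only [List.mem_append, List.mem_singleton] at hu
      rcases hu with hu | rfl
      · exact hxL' u (by simp [hu])
      · exact fun hx => hxL' (u ++ u₂) (by simp) (List.mem_append_left _ hx)
    obtain ⟨rfl, hv₁⟩ := List.append_inj' (joinSep_injective hxMv hxL₃ (by simpa using h₃)) rfl
    obtain rfl : v = u₁ := by simpa using hv₁
    exact ⟨pre, u₂, L₄, by simp, rfl, rfl⟩

theorem step_joinSep {L : List (List α)} {V : List α} (hL : ∀ u ∈ L, x ∉ u)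
    (h : Step (joinSep x L) V) :
    (∃ L₁ u u' L₂, L = L₁ ++ u :: L₂ ∧ Step u u' ∧ V = joinSep x (L₁ ++ u' :: L₂)) ∨
    ∃ pre N v β w L₂, L = pre ++ N ++ (v ++ β) :: N ++ (v ++ w) :: L₂ ∧ β <:+ joinSep x pre ∧
      V = joinSep x (pre ++ N ++ (v ++ w) :: L₂) := by
  obtain ⟨U, X, T, hX, hL', rfl⟩ := h
  by_cases hxX : x ∈ X
  · -- `X = β x n₁ x ⋯ x v`, so `X X` covers the blocks `n₁, …, v β, n₁, …` of `L`
    right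
    obtain ⟨β, Ns, rfl, hβ, hNs⟩ := exists_eq_append_joinSep (x := x) X
    obtain ⟨N, v, rfl⟩ : ∃ N v, Ns = N ++ [v] := by
      rcases List.eq_nil_or_concat Ns with rfl | ⟨N, v, rfl⟩
      · simp_all
      · exact ⟨N, v, by simp⟩
    have hsq : U ++ (β ++ joinSep x (N ++ [v]) ++ (β ++ joinSep x (N ++ [v]))) ++ T =
        (U ++ β) ++ joinSep x ((N ++ [v ++ β] ++ N) ++ [v]) ++ T := by simp
    have hM : ∀ u ∈ N ++ [v ++ β] ++ N, x ∉ u := by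
      simp only [List.mem_append, List.mem_singleton]
      rintro u ((hu | rfl) | hu)
      · exact hNs u (by simp [hu])
      · simpa [hβ] using hNs v (by simp)
      · exact hNs u (by simp [hu])
    obtain ⟨pre, w, L₂, rfl, hpre, rfl⟩ := joinSep_eq_append_joinSep_append hL hM
      (hNs v (by simp)) (hL'.trans hsq)
    refine ⟨pre, N, v, β, w, L₂, by simp, hpre ▸ List.suffix_append U β, ?_⟩
    simp [← hpre]
  · left
    rcases joinSep_eq_append (hL'.trans (List.append_assoc _ _ _)) with
      ⟨L₁, L₂, -, -, h₂⟩ | ⟨L₁, u₁, u₂, L₂, rfl, rfl, h₂⟩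
    · obtain ⟨a, X, rfl⟩ := List.exists_cons_of_ne_nil hX
      obtain ⟨t, ht⟩ := exists_joinSep_eq_cons (x := x) (L := L₂) (by rintro rfl; simp at h₂)
      rw [ht, List.cons_append, List.cons_append, List.cons.injEq] at h₂
      exact absurd (by simp [h₂.1]) hxX
    · obtain ⟨r, rfl, rfl⟩ := exists_of_append_eq_append_joinSep (by simpa using hxX) h₂
      exact ⟨L₁, u₁ ++ (X ++ X ++ r), u₁ ++ (X ++ r), L₂, by simp,
        ⟨u₁, X, r, hX, by simp, by simp⟩, by simp⟩

end JoinSep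

lemma not_step_aba (u' : List (Fin 4)) : ¬ Step [0, 1, 0] u' := by
  intro h
  obtain ⟨i, hi, n, hn, h, -⟩ := h.exists_index
  revert i n
  decide

lemma not_step_ab (u' : List (Fin 4)) : ¬ Step [0, 1] u' := by
  intro h
  obtain ⟨i, hi, n, hn, h, -⟩ := h.exists_index
  revert i n
  decide

lemma eq_ab_of_step_abab {u' : List (Fin 4)} (h : Step [0, 1, 0, 1] u') : u' = [0, 1] := by
  obtain ⟨i, hi, n, hn, h, rfl⟩ := h.exists_index
  clear h
  revert i n
  decide

/-- The connectors `F = xabaxababx`, `G = xababx`, `Q = xabaxabx`, `P = xabx`; `c.blocks` lists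
the pieces of `c` after each letter `x` but the last one, which is followed by a word `W j`. -/
inductive Conn
  | F | G | Q | P

namespace Conn

def blocks : Conn → List (List (Fin 4))
  | F => [[0, 1, 0], [0, 1, 0, 1]]
  | G => [[0, 1, 0, 1]]
  | Q => [[0, 1, 0], [0, 1]]
  | P => [[0, 1]]

inductive Shrinks : Conn → Conn → Prop
  | F_Q : Shrinks F Q
  | F_G : Shrinks F G
  | G_P : Shrinks G P

lemma head?_of_mem_blocks {c : Conn} {u : List (Fin 4)} (hu : u ∈ c.blocks) :
    u.head? = some 0 := by
  cases c <;> simp [blocks] at hu <;> rcases hu with rfl | rfl <;> rfl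

lemma two_notMem_of_mem_blocks {c : Conn} {u : List (Fin 4)} (hu : u ∈ c.blocks) : 2 ∉ u := by
  cases c <;> simp [blocks] at hu <;> rcases hu with rfl | rfl <;> decide

lemma blocks_ne_nil (c : Conn) : c.blocks ≠ [] := by
  cases c <;> simp [blocks]

lemma length_blocks_le (c : Conn) : c.blocks.length ≤ 2 := by
  cases c <;> simp [blocks]

lemma eq_nil_of_blocks_eq_append_cons {c d : Conn} {N t : List (List (Fin 4))} {b : List (Fin 4)}
    (hd : d.blocks = N ++ b :: t) (hc : N <:+ c.blocks) : N = [] := by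
  cases d <;> rcases N with _ | ⟨n, _ | ⟨n', N⟩⟩ <;> simp [blocks] at hd ⊢ <;>
    obtain ⟨rfl, -⟩ := hd <;> cases c <;> exact absurd hc (by decide)

lemma exists_shrinks_of_step {c : Conn} {s₁ s₂ : List (List (Fin 4))} {u u' : List (Fin 4)}
    (hc : c.blocks = s₁ ++ u :: s₂) (hu : Step u u') :
    ∃ c', c.Shrinks c' ∧ c'.blocks = s₁ ++ u' :: s₂ := by
  cases c <;> rcases s₁ with _ | ⟨a, _ | ⟨b, s₁⟩⟩ <;> simp [blocks] at hc
  · exact absurd hu (hc.1 ▸ not_step_aba u')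
  · obtain ⟨rfl, rfl, rfl⟩ := hc
    exact ⟨Q, .F_Q, by rw [eq_ab_of_step_abab hu]; rfl⟩
  · obtain ⟨rfl, rfl⟩ := hc
    exact ⟨P, .G_P, by rw [eq_ab_of_step_abab hu]; rfl⟩
  · exact absurd hu (hc.1 ▸ not_step_aba u')
  · exact absurd hu (hc.2.1 ▸ not_step_ab u')
  · exact absurd hu (hc.1 ▸ not_step_ab u')

end Conn

structure Admissible (W : ℕ → List (Fin 4)) : Prop where
  head?_eq : ∀ j, (W j).head? = some 3
  getLast?_eq : ∀ j, (W j).getLast? = some 3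
  two_notMem : ∀ j, 2 ∉ W j
  squareFree : ∀ j, SquareFree (W j)
  prefix_of_lt : ∀ {j j'}, j < j' → W j <+: W j'
  length_strictMono : StrictMono fun j => (W j).length

section Chains

variable {W : ℕ → List (Fin 4)}

variable (W) in
def chainBlocks (σ : List (Conn × ℕ)) : List (List (Fin 4)) :=
  σ.flatMap fun p => p.1.blocks ++ [W p.2]

variable (W) in
/-- The chain `[(c₀, j₀), …, (cₙ, jₙ)]` stands for the word `c₀ W j₀ ⋯ cₙ W jₙ`. -/
def chainWord (σ : List (Conn × ℕ)) : List (Fin 4) := joinSep 2 (chainBlocks W σ)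

@[simp] lemma chainBlocks_nil : chainBlocks W [] = [] := rfl

@[simp] lemma chainBlocks_cons (c : Conn) (j : ℕ) (σ : List (Conn × ℕ)) :
    chainBlocks W ((c, j) :: σ) = c.blocks ++ W j :: chainBlocks W σ := by
  simp [chainBlocks]

@[simp] lemma chainBlocks_append (σ τ : List (Conn × ℕ)) :
    chainBlocks W (σ ++ τ) = chainBlocks W σ ++ chainBlocks W τ :=
  List.flatMap_append

inductive Move : List (Conn × ℕ) → List (Conn × ℕ) → Prop
  | shrink {c c' : Conn} (j : ℕ) (σ : List (Conn × ℕ)) :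
      c.Shrinks c' → Move ((c, j) :: σ) ((c', j) :: σ)
  | merge {c d : Conn} {j j' : ℕ} (σ : List (Conn × ℕ)) :
      d.blocks <:+ c.blocks → j < j' → Move ((c, j) :: (d, j') :: σ) ((c, j') :: σ)
  | cons (a : Conn × ℕ) {σ σ' : List (Conn × ℕ)} : Move σ σ' → Move (a :: σ) (a :: σ')

lemma Move.append_left {σ σ' : List (Conn × ℕ)} (h : Move σ σ') (τ : List (Conn × ℕ)) :
    Move (τ ++ σ) (τ ++ σ') := by
  induction τ with
  | nil => exact h
  | cons a τ ih => exact .cons a ih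

lemma Move.append_right {σ σ' : List (Conn × ℕ)} (h : Move σ σ') (τ : List (Conn × ℕ)) :
    Move (σ ++ τ) (σ' ++ τ) := by
  induction h with
  | shrink j σ hc => exact .shrink j _ hc
  | merge σ hcd hj => exact .merge _ hcd hj
  | cons a _ ih => exact .cons a ih

lemma Move.step (hW : Admissible W) {σ σ' : List (Conn × ℕ)} (h : Move σ σ') :
    Step (chainWord W σ) (chainWord W σ') := by
  induction h with
  | shrink j σ hc =>
    cases hc
    · exact ⟨[2, 0, 1, 0, 2], [0, 1], 2 :: W j ++ chainWord W σ, by simp,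
        by simp [chainWord, Conn.blocks], by simp [chainWord, Conn.blocks]⟩
    · exact ⟨[], [2, 0, 1, 0], 1 :: 2 :: W j ++ chainWord W σ, by simp,
        by simp [chainWord, Conn.blocks], by simp [chainWord, Conn.blocks]⟩
    · exact ⟨[2], [0, 1], 2 :: W j ++ chainWord W σ, by simp,
        by simp [chainWord, Conn.blocks], by simp [chainWord, Conn.blocks]⟩
  | @merge c d j j' σ hcd hj =>
    obtain ⟨K, hK⟩ := hcd
    obtain ⟨ρ, hρ⟩ := hW.prefix_of_lt hj
    refine ⟨joinSep 2 K, joinSep 2 d.blocks ++ 2 :: W j, ρ ++ chainWord W σ, by simp, ?_, ?_⟩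
    · simp [chainWord, ← hK, ← hρ]
    · simp [chainWord, ← hK, ← hρ]
  | cons a _ ih =>
    obtain ⟨c, j⟩ := a
    simpa [chainWord] using ih.append_left (joinSep 2 (c.blocks ++ [W j]))

end Chains

section Core

variable {W : ℕ → List (Fin 4)}

lemma Admissible.notMem_blocks (hW : Admissible W) (j : ℕ) {c : Conn} : W j ∉ c.blocks :=
  fun h => by simpa [hW.head?_eq j] using Conn.head?_of_mem_blocks h

lemma Admissible.two_notMem_chainBlocks (hW : Admissible W) (σ : List (Conn × ℕ)) :
    ∀ u ∈ chainBlocks W σ, 2 ∉ u := by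
  simp only [chainBlocks, List.mem_flatMap, List.mem_append, List.mem_singleton]
  rintro u ⟨p, -, hu | rfl⟩
  exacts [Conn.two_notMem_of_mem_blocks hu, hW.two_notMem _]

lemma Admissible.notMem_chainBlocks (hW : Admissible W) {j : ℕ} {σ : List (Conn × ℕ)}
    (hσ : ∀ p ∈ σ, j < p.2) : W j ∉ chainBlocks W σ := by
  simp only [chainBlocks, List.mem_flatMap, List.mem_append, List.mem_singleton, not_exists,
    not_and, not_or]
  exact fun p hp =>
    ⟨hW.notMem_blocks j, fun h => (hW.length_strictMono (hσ p hp)).ne (congrArg List.length h)⟩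

lemma exists_of_chainBlocks_eq_append_cons {σ : List (Conn × ℕ)} {A B : List (List (Fin 4))}
    {u : List (Fin 4)} (h : chainBlocks W σ = A ++ u :: B) :
    ∃ σ₁ c j σ₂ s₁ s₂, σ = σ₁ ++ (c, j) :: σ₂ ∧ c.blocks ++ [W j] = s₁ ++ u :: s₂ ∧
      A = chainBlocks W σ₁ ++ s₁ ∧ B = s₂ ++ chainBlocks W σ₂ := by
  obtain ⟨σ₁, ⟨c, j⟩, σ₂, s₁, s₂, h⟩ := List.exists_of_flatMap_eq_append_cons h
  exact ⟨σ₁, c, j, σ₂, s₁, s₂, h⟩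

/-- The words `W j` are pairwise distinct, so a block that occurs twice is a connector block. -/
lemma Admissible.ne_of_chainBlocks_eq (hW : Admissible W) {σ : List (Conn × ℕ)}
    (hσ : (σ.map Prod.snd).Pairwise (· < ·)) {A B : List (List (Fin 4))} {u : List (Fin 4)}
    (h : chainBlocks W σ = A ++ u :: B) (hu : u ∈ B) (j : ℕ) : u ≠ W j := by
  rintro rfl
  obtain ⟨σ₁, c, j₀, σ₂, s₁, s₂, rfl, hchunk, -, rfl⟩ := exists_of_chainBlocks_eq_append_cons h
  rcases List.append_singleton_eq_append_cons hchunk with ⟨-, hj, rfl⟩ | ⟨t, hc, -⟩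
  · exact hW.notMem_chainBlocks (lt_snd_of_pairwise_map_snd hσ rfl) (by simpa [hj] using hu)
  · exact hW.notMem_blocks j (hc ▸ List.mem_append_right _ List.mem_cons_self)

lemma exists_of_chainBlocks_eq_append_append {σ : List (Conn × ℕ)}
    {A N C : List (List (Fin 4))} (h : chainBlocks W σ = A ++ N ++ C) (hN : N ≠ [])
    (hNW : ∀ j, W j ∉ N) :
    ∃ σ₁ c j σ₂ s₁ s₂, σ = σ₁ ++ (c, j) :: σ₂ ∧ c.blocks = s₁ ++ N ++ s₂ ∧
      A = chainBlocks W σ₁ ++ s₁ ∧ C = s₂ ++ W j :: chainBlocks W σ₂ := by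
  obtain ⟨n, N, rfl⟩ := List.exists_cons_of_ne_nil hN
  obtain ⟨σ₁, c, j, σ₂, s₁, s₂, rfl, hchunk, rfl, hrest⟩ :=
    exists_of_chainBlocks_eq_append_cons (A := A) (u := n) (B := N ++ C) (by simpa using h)
  rcases List.append_singleton_eq_append_cons hchunk with ⟨-, rfl, -⟩ | ⟨t, hc, rfl⟩
  · exact absurd (by simp) (hNW j)
  rw [List.append_assoc, List.singleton_append] at hrest
  rcases List.append_eq_append_iff.1 hrest with ⟨m, rfl, rfl⟩ | ⟨_ | ⟨b, m⟩, rfl, hC⟩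
  · exact ⟨σ₁, c, j, σ₂, s₁, m, rfl, by simp [hc], rfl, rfl⟩
  · exact ⟨σ₁, c, j, σ₂, s₁, [], rfl, by simp [hc], rfl, by simpa using hC.symm⟩
  · obtain ⟨rfl, -⟩ := List.cons_eq_cons.1 hC
    exact absurd (by simp) (hNW j)

/-- A square `X X` whose half `X` spans at least two letters `x` repeats whole blocks; as the
words `W j` are distinct, the repeated blocks form a common part of two consecutive connectors. -/
lemma Admissible.exists_move_of_repeat (hW : Admissible W) {σ : List (Conn × ℕ)}
    (hσ : (σ.map Prod.snd).Pairwise (· < ·)) {pre N L₂ : List (List (Fin 4))}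
    {b b' : List (Fin 4)} (h : chainBlocks W σ = pre ++ N ++ b :: N ++ b' :: L₂) (hN : N ≠ []) :
    ∃ σ', Move σ σ' ∧ chainBlocks W σ' = pre ++ N ++ b' :: L₂ := by
  have hNW : ∀ j, W j ∉ N := by
    intro j hj
    obtain ⟨N₁, N₂, rfl⟩ := List.append_of_mem hj
    exact hW.ne_of_chainBlocks_eq hσ (A := pre ++ N₁)
      (B := N₂ ++ b :: (N₁ ++ W j :: N₂) ++ b' :: L₂) (h.trans (by simp)) (by simp) j rfl
  obtain ⟨σ₁, c, j, σ₂, s₁, s₂, rfl, hc, rfl, hrest⟩ :=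
    exists_of_chainBlocks_eq_append_append (A := pre) (C := b :: N ++ b' :: L₂)
      (h.trans (by simp)) hN hNW
  rcases s₂ with _ | ⟨b₀, s₂⟩
  · simp only [List.nil_append, List.cons_append, List.cons.injEq] at hrest
    obtain ⟨rfl, hrest⟩ := hrest
    rcases σ₂ with _ | ⟨⟨d, j'⟩, σ₃⟩
    · simp at hrest
    rw [chainBlocks_cons] at hrest
    have hdN : d.blocks = N := by
      rcases List.append_eq_append_iff.1 hrest with ⟨_ | ⟨b'', m⟩, hd, -⟩ | ⟨_ | ⟨w, m⟩, hN', hm⟩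
      · simpa using hd
      · exact absurd (Conn.eq_nil_of_blocks_eq_append_cons (c := c) hd ⟨s₁, by simp [hc]⟩) hN
      · simpa using hN'.symm
      · obtain ⟨rfl, -⟩ := List.cons_eq_cons.1 hm
        exact absurd (by simp [hN']) (hNW j')
    subst hdN
    obtain ⟨rfl, rfl⟩ := List.cons_eq_cons.1 (List.append_cancel_left hrest)
    refine ⟨σ₁ ++ (c, j') :: σ₃, ?_, by simp [hc]⟩
    have hjj' : j < j' := lt_snd_of_pairwise_map_snd hσ rfl _ List.mem_cons_self
    exact (Move.merge σ₃ ⟨s₁, by simp [hc]⟩ hjj').append_left σ₁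
  · simp only [List.cons_append, List.cons.injEq] at hrest
    obtain ⟨rfl, hrest⟩ := hrest
    obtain rfl : s₂ = [] := by
      have hlen := c.length_blocks_le
      have := List.length_pos_iff.2 hN
      simp only [hc, List.length_append, List.length_cons] at hlen
      exact List.eq_nil_of_length_eq_zero (by omega)
    obtain ⟨n, N, rfl⟩ := List.exists_cons_of_ne_nil hN
    simp only [List.nil_append, List.cons_append, List.cons.injEq] at hrest
    exact absurd (by simp [hrest.1]) (hNW j)

lemma Admissible.getLast?_joinSep_chainBlocks (hW : Admissible W) (σ : List (Conn × ℕ)) :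
    (joinSep 2 (chainBlocks W σ)).getLast? = none ∨
      (joinSep 2 (chainBlocks W σ)).getLast? = some 3 := by
  rcases List.eq_nil_or_concat σ with rfl | ⟨σ, ⟨c, j⟩, rfl⟩
  · simp
  · right
    have := hW.getLast?_eq j
    simp_all [List.getLast?_cons]

/-- Consecutive blocks end in different letters, and the only prefix relation between consecutive
blocks is `aba <+: abab` in `F`; so a square `X X` whose half `X` contains a single letter `x`
can only delete the block `aba` of a connector `F`. -/
lemma Admissible.exists_move_of_adjacent (hW : Admissible W) {σ : List (Conn × ℕ)}
    {pre L₂ : List (List (Fin 4))} {b b' : List (Fin 4)}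
    (h : chainBlocks W σ = pre ++ b :: b' :: L₂)
    (hbb' : b <+: b' ∨ b.getLast? = (joinSep 2 pre).getLast?) :
    ∃ σ', Move σ σ' ∧ chainBlocks W σ' = pre ++ b' :: L₂ := by
  obtain ⟨σ₁, c, j, σ₂, s₁, s₂, rfl, hchunk, rfl, hrest⟩ := exists_of_chainBlocks_eq_append_cons h
  have hσ₁ := hW.getLast?_joinSep_chainBlocks σ₁
  rcases List.append_singleton_eq_append_cons hchunk with ⟨rfl, rfl, rfl⟩ | ⟨t, hc, rfl⟩
  · exfalso
    rcases σ₂ with _ | ⟨⟨d, j'⟩, σ₃⟩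
    · simp at hrest
    obtain ⟨b₀, d', hd⟩ := List.exists_cons_of_ne_nil d.blocks_ne_nil
    simp only [List.nil_append, chainBlocks_cons, hd, List.cons_append, List.cons.injEq] at hrest
    obtain ⟨rfl, -⟩ := hrest
    have h₀ := Conn.head?_of_mem_blocks (hd ▸ List.mem_cons_self : b' ∈ d.blocks)
    have h₃ := hW.head?_eq j
    have h₃' := hW.getLast?_eq j
    rcases hbb' with ⟨r, rfl⟩ | hlast
    · simp [h₃] at h₀
    · cases c <;> simp [h₃', Conn.blocks] at hlast
  · have h₃ := hW.head?_eq j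
    cases c <;> rcases s₁ with _ | ⟨a, _ | ⟨a', s₁⟩⟩ <;> simp [Conn.blocks] at hc <;>
      casesm* _ ∧ _ <;> subst_vars <;> simp at hrest <;> casesm* _ ∧ _ <;> subst_vars
    · exact ⟨σ₁ ++ (.G, j) :: σ₂, (Move.shrink j σ₂ .F_G).append_left σ₁, by simp [Conn.blocks]⟩
    all_goals
      exfalso
      rcases hbb' with ⟨r, hr⟩ | hlast
      · first | simp [← hr] at h₃ | simpa using congrArg List.length hr
      · rcases hσ₁ with h' | h' <;> simp [h'] at hlast

theorem Admissible.exists_move_of_step (hW : Admissible W) {σ : List (Conn × ℕ)}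
    (hσ : (σ.map Prod.snd).Pairwise (· < ·)) {V : List (Fin 4)} (h : Step (chainWord W σ) V) :
    ∃ σ', Move σ σ' ∧ V = chainWord W σ' := by
  rcases step_joinSep (hW.two_notMem_chainBlocks σ) h with
    ⟨L₁, u, u', L₂, hL, hu, rfl⟩ | ⟨pre, N, v, β, w, L₂, hL, hβ, rfl⟩
  · obtain ⟨σ₁, c, j, σ₂, s₁, s₂, rfl, hchunk, rfl, rfl⟩ := exists_of_chainBlocks_eq_append_cons hL
    rcases List.append_singleton_eq_append_cons hchunk with ⟨-, rfl, -⟩ | ⟨t, hc, rfl⟩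
    · exact absurd (hW.squareFree j) hu.not_squareFree
    obtain ⟨c', hcc', hc'⟩ := Conn.exists_shrinks_of_step hc hu
    exact ⟨σ₁ ++ (c', j) :: σ₂, (Move.shrink j σ₂ hcc').append_left σ₁, by simp [chainWord, hc']⟩
  · rcases eq_or_ne N [] with rfl | hN
    · obtain ⟨σ', hσσ', hσ'⟩ := hW.exists_move_of_adjacent (by simpa using hL)
        (List.prefix_or_getLast?_eq_of_suffix (w := w) hβ)
      exact ⟨σ', hσσ', by simp [chainWord, hσ']⟩
    · obtain ⟨σ', hσσ', hσ'⟩ := hW.exists_move_of_repeat hσ hL hN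
      exact ⟨σ', hσσ', by simp [chainWord, hσ']⟩

end Core

section Reducts

variable {W : ℕ → List (Fin 4)}

def IsChainTo (i : ℕ) (σ : List (Conn × ℕ)) : Prop :=
  (σ.map Prod.snd).Pairwise (· < ·) ∧ (σ.map Prod.snd).getLast? = some i

lemma Move.sublist_map_snd {σ σ' : List (Conn × ℕ)} (h : Move σ σ') :
    (σ'.map Prod.snd).Sublist (σ.map Prod.snd) := by
  induction h with
  | shrink => exact .refl _
  | merge => exact .cons _ (.refl _)
  | cons a _ ih => exact ih.cons_cons _

lemma Move.getLast?_map_snd {σ σ' : List (Conn × ℕ)} (h : Move σ σ') :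
    (σ'.map Prod.snd).getLast? = (σ.map Prod.snd).getLast? := by
  induction h with
  | shrink => simp [List.getLast?_cons]
  | merge σ => cases σ <;> simp [List.getLast?_cons]
  | cons a _ ih => simp [List.getLast?_cons, ih]

lemma Move.isChainTo {i : ℕ} {σ σ' : List (Conn × ℕ)} (h : Move σ σ') (hσ : IsChainTo i σ) :
    IsChainTo i σ' :=
  ⟨hσ.1.sublist h.sublist_map_snd, h.getLast?_map_snd.trans hσ.2⟩

lemma Admissible.squareFree_chainWord_iff (hW : Admissible W) {σ : List (Conn × ℕ)}
    (hσ : (σ.map Prod.snd).Pairwise (· < ·)) :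
    SquareFree (chainWord W σ) ↔ ∀ σ', ¬ Move σ σ' := by
  refine ⟨fun h σ' hm => (hm.step hW).not_squareFree h, fun h => ?_⟩
  refine squareFree_iff_forall_not_step.2 fun V hV => ?_
  obtain ⟨σ', hm, -⟩ := hW.exists_move_of_step hσ hV
  exact h σ' hm

lemma Admissible.exists_of_reaches (hW : Admissible W) {i : ℕ} {σ : List (Conn × ℕ)}
    (hσ : IsChainTo i σ) {V : List (Fin 4)} (h : Reaches (chainWord W σ) V) :
    ∃ σ', IsChainTo i σ' ∧ V = chainWord W σ' := by
  induction h with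
  | refl => exact ⟨σ, hσ, rfl⟩
  | tail _ hV ih =>
    obtain ⟨σ', hσ', rfl⟩ := ih
    obtain ⟨σ'', hm, rfl⟩ := hW.exists_move_of_step hσ'.1 hV
    exact ⟨σ'', hm.isChainTo hσ', rfl⟩

lemma eq_of_isChainTo_of_forall_not_move {i : ℕ} {σ : List (Conn × ℕ)} (hσ : IsChainTo i σ)
    (h : ∀ σ', ¬ Move σ σ') :
    σ = [(.Q, i)] ∨ σ = [(.P, i)] ∨ ∃ j < i, σ = [(.P, j), (.Q, i)] := by
  obtain ⟨hinc, hlast⟩ := hσ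
  rcases σ with _ | ⟨⟨c, j⟩, _ | ⟨⟨d, j'⟩, σ⟩⟩
  · simp at hlast
  · obtain rfl : j = i := by simpa using hlast
    cases c
    exacts [absurd (.shrink j [] .F_Q) (h _), absurd (.shrink j [] .G_P) (h _), .inl rfl,
      .inr (.inl rfl)]
  have hjj' : j < j' := List.rel_of_pairwise_cons hinc List.mem_cons_self
  obtain ⟨rfl, rfl⟩ : c = .P ∧ d = .Q := by
    cases c
    · exact absurd (.shrink j _ .F_Q) (h _)
    · exact absurd (.shrink j _ .G_P) (h _)
    all_goals cases d
    all_goals first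
      | exact absurd (.cons _ (.shrink j' σ .F_Q)) (h _)
      | exact absurd (.cons _ (.shrink j' σ .G_P)) (h _)
      | exact absurd (.merge σ (by decide) hjj') (h _)
      | exact ⟨rfl, rfl⟩
  rcases σ with _ | ⟨⟨e, j''⟩, σ⟩
  · obtain rfl : j' = i := by simpa using hlast
    exact .inr (.inr ⟨j, hjj', rfl⟩)
  have hj'j'' : j' < j'' := List.rel_of_pairwise_cons hinc.of_cons List.mem_cons_self
  cases e
  · exact absurd (.cons _ (.cons _ (.shrink j'' σ .F_Q))) (h _)
  · exact absurd (.cons _ (.cons _ (.shrink j'' σ .G_P))) (h _)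
  all_goals exact absurd (.cons _ (.merge σ (by decide) hj'j'')) (h _)

lemma not_move_Q (i : ℕ) (σ' : List (Conn × ℕ)) : ¬ Move [(.Q, i)] σ' := by
  rintro (⟨_, _, ⟨⟩⟩ | _ | ⟨_, ⟨⟩⟩)

lemma not_move_P (i : ℕ) (σ' : List (Conn × ℕ)) : ¬ Move [(.P, i)] σ' := by
  rintro (⟨_, _, ⟨⟩⟩ | _ | ⟨_, ⟨⟩⟩)

lemma not_move_PQ (j i : ℕ) (σ' : List (Conn × ℕ)) : ¬ Move [(.P, j), (.Q, i)] σ' := by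
  rintro (⟨_, _, ⟨⟩⟩ | ⟨_, h, -⟩ | ⟨_, h⟩)
  · exact absurd h (by decide)
  · exact not_move_Q i _ h

lemma Move.reflTransGen_append_right {σ σ' : List (Conn × ℕ)}
    (h : Relation.ReflTransGen Move σ σ') (τ : List (Conn × ℕ)) :
    Relation.ReflTransGen Move (σ ++ τ) (σ' ++ τ) :=
  h.lift _ fun _ _ hm => hm.append_right τ

lemma Admissible.reaches_of_reflTransGen (hW : Admissible W) {σ σ' : List (Conn × ℕ)}
    (h : Relation.ReflTransGen Move σ σ') : Reaches (chainWord W σ) (chainWord W σ') :=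
  h.lift _ fun _ _ hm => hm.step hW

def fChain : ℕ → List (Conn × ℕ)
  | 0 => [(.F, 0)]
  | i + 1 => fChain i ++ [(.F, i + 1)]

lemma map_snd_fChain (i : ℕ) : (fChain i).map Prod.snd = List.range (i + 1) := by
  induction i with
  | zero => rfl
  | succ i ih => simp [fChain, ih, List.range_succ]

lemma isChainTo_fChain (i : ℕ) : IsChainTo i (fChain i) := by
  rw [IsChainTo, map_snd_fChain]
  exact ⟨List.pairwise_lt_range, by simp [List.getLast?_range]⟩

lemma reflTransGen_fChain_single (i : ℕ) : Relation.ReflTransGen Move (fChain i) [(.F, i)] := by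
  induction i with
  | zero => exact .refl
  | succ i ih =>
    exact (Move.reflTransGen_append_right ih _).tail
      (.merge [] (List.suffix_refl _) (Nat.lt_succ_self i))

lemma reflTransGen_fChain_pair {j i : ℕ} (hji : j < i) :
    Relation.ReflTransGen Move (fChain i) [(.F, j), (.F, i)] := by
  induction i, hji using Nat.le_induction with
  | base => exact Move.reflTransGen_append_right (reflTransGen_fChain_single j) _
  | succ i _ ih =>
    exact (Move.reflTransGen_append_right ih _).tail
      (.cons _ (.merge [] (List.suffix_refl _) (Nat.lt_succ_self i)))

lemma Admissible.reducts_chainWord_fChain (hW : Admissible W) (i : ℕ) :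
    Reducts (chainWord W (fChain i)) = {chainWord W [(.P, i)], chainWord W [(.Q, i)]} ∪
      {R | ∃ j < i, R = chainWord W [(.P, j), (.Q, i)]} := by
  ext R
  constructor
  · rintro ⟨hR, hRsf⟩
    obtain ⟨σ, hσ, rfl⟩ := hW.exists_of_reaches (isChainTo_fChain i) hR
    rcases eq_of_isChainTo_of_forall_not_move hσ ((hW.squareFree_chainWord_iff hσ.1).1 hRsf) with
      rfl | rfl | ⟨j, hj, rfl⟩
    · simp
    · simp
    · exact .inr ⟨j, hj, rfl⟩
  · rintro ((rfl | rfl) | ⟨j, hj, rfl⟩)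
    · refine ⟨hW.reaches_of_reflTransGen ?_,
        (hW.squareFree_chainWord_iff (by simp)).2 (not_move_P i)⟩
      exact (reflTransGen_fChain_single i).tail (.shrink i [] .F_G) |>.tail (.shrink i [] .G_P)
    · refine ⟨hW.reaches_of_reflTransGen ?_,
        (hW.squareFree_chainWord_iff (by simp)).2 (not_move_Q i)⟩
      exact (reflTransGen_fChain_single i).tail (.shrink i [] .F_Q)
    · refine ⟨hW.reaches_of_reflTransGen ?_,
        (hW.squareFree_chainWord_iff (by simpa using hj)).2 (not_move_PQ j i)⟩
      exact (reflTransGen_fChain_pair hj).tail (.shrink j _ .F_G) |>.tail (.shrink j _ .G_P)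
        |>.tail (.cons _ (.shrink i [] .F_Q))

end Reducts

lemma admissible_map_range {Winf : ℕ → Fin 4} {l : ℕ → ℕ} (halpha : ∀ n, Winf n ≠ 2)
    (hstart : Winf 0 = 3) (hsf : ∀ n, SquareFree ((List.range n).map Winf))
    (hmono : StrictMono l) (hpos : ∀ i, 0 < l i) (hend : ∀ i, Winf (l i - 1) = 3) :
    Admissible fun i => (List.range (l i)).map Winf where
  head?_eq i := by simp [List.head?_range, (hpos i).ne', hstart]
  getLast?_eq i := by simp [List.getLast?_range, (hpos i).ne', hend]
  two_notMem i := by simp [halpha]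
  squareFree i := hsf (l i)
  prefix_of_lt h := (List.prefix_iff_eq_take.2 (by simp [(hmono h).le])).map Winf
  length_strictMono := by simpa [StrictMono] using hmono

lemma ncard_pair_union_setOf_lt {α : Type*} {A B : List α} {f : ℕ → List α} (i : ℕ)
    (hAB : A.length < B.length) (hBf : ∀ j, B.length < (f j).length)
    (hf : StrictMono fun j => (f j).length) :
    ({A, B} ∪ {R | ∃ j < i, R = f j}).ncard = i + 2 := by
  have himage : {R | ∃ j < i, R = f j} = f '' Set.Iio i := by
    ext R
    simp [eq_comm]
  have hA : A ∉ insert B (f '' Set.Iio i) := by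
    rintro (h | ⟨j, -, h⟩)
    · exact hAB.ne (congrArg List.length h)
    · exact (hAB.trans (hBf j)).ne' (congrArg List.length h)
  have hB : B ∉ f '' Set.Iio i := fun ⟨j, _, h⟩ => (hBf j).ne' (congrArg List.length h)
  rw [himage, Set.insert_union, Set.singleton_union, Set.ncard_insert_of_notMem hA,
    Set.ncard_insert_of_notMem hB, Set.ncard_image_of_injective _ hf.injective.of_comp]
  simp

/-- With `F = xabaxababx`, `P = xabx`, `Q = xabaxabx` over `{a, b, x, y}`
(encoded in `Fin 4` as `a = 0`, `b = 1`, `x = 2`, `y = 3`), let `Winf` be an infinite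
square-free word over `{a, b, y}` starting with `y`, let `W i` (for `i = 0, 1, …`,
corresponding to `W_{i+1}` in the paper) be prefixes of `Winf` of strictly increasing
lengths each ending with `y`, and let `S i = F W 0 F W 1 ⋯ F W i`. Then the set of
square-free reducts of `S i` is exactly
`{P ++ W i, Q ++ W i} ∪ {P ++ W j ++ Q ++ W i : j < i}`, and `r(S i) = i + 2`. -/
theorem reducts_of_S
    (F P Q : List (Fin 4))
    (hF : F = [2,0,1,0,2,0,1,0,1,2]) (hP : P = [2,0,1,2]) (hQ : Q = [2,0,1,0,2,0,1,2])
    (Winf : ℕ → Fin 4)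
    (halpha : ∀ n, Winf n ≠ 2)
    (hstart : Winf 0 = 3)
    (hsf : ∀ n, SquareFree ((List.range n).map Winf))
    (l : ℕ → ℕ) (hmono : StrictMono l) (hpos : ∀ i, 0 < l i)
    (hend : ∀ i, Winf (l i - 1) = 3)
    (W : ℕ → List (Fin 4)) (hW : ∀ i, W i = (List.range (l i)).map Winf)
    (S : ℕ → List (Fin 4))
    (hS0 : S 0 = F ++ W 0)
    (hSsucc : ∀ i, S (i + 1) = S i ++ F ++ W (i + 1)) :
    ∀ i, Reducts (S i) =
        ({P ++ W i, Q ++ W i} ∪ {R | ∃ j < i, R = P ++ W j ++ Q ++ W i}) ∧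
      (Reducts (S i)).ncard = i + 2 := by
  have hWadm : Admissible W := by
    rw [show W = _ from funext hW]
    exact admissible_map_range halpha hstart hsf hmono hpos hend
  have hS : ∀ i, S i = chainWord W (fChain i) := by
    intro i
    induction i with
    | zero => simp [hS0, hF, fChain, chainWord, Conn.blocks]
    | succ i ih => simp [hSsucc, ih, hF, fChain, chainWord, Conn.blocks]
  intro i
  have hreducts : Reducts (S i) =
      {P ++ W i, Q ++ W i} ∪ {R | ∃ j < i, R = P ++ W j ++ Q ++ W i} := by
    rw [hS, hWadm.reducts_chainWord_fChain]
    simp [chainWord, Conn.blocks, hP, hQ]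
  refine ⟨hreducts, hreducts ▸ ncard_pair_union_setOf_lt i (by simp [hP, hQ]) (fun j => ?_) ?_⟩
  · simp [hP, hQ]; omega
  · intro a b hab
    simpa using hWadm.length_strictMono hab
end

section
/- Let W = a_1 a_2 ⋯ a_n be a square-free word, where each a_i is a single letter, and let V = a_1^{k_1} a_2^{k_2} ⋯ a_n^{k_n}, where each k_i is a positive integer. Then every square occurring as a factor of V has the form x^{2k} for some positive integer k and some single letter x equal to one of the a_i. -/
/-!
Collapsing every run of equal letters (`List.destutter (· ≠ ·)`) sends `V` back to `W` and
sends factors to factors. Let `D` be the collapse of `X`. The collapse of `X ++ X` begins with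
the square `D ++ D` if the last letter of `X` differs from the first, and with the square
`D.dropLast ++ D.dropLast` otherwise. This square is a factor of the square-free `W`, so `D` is a
single letter, i.e. `X` is a power of one letter.
-/

namespace List

variable {α : Type*}

section Rel

variable {R : α → α → Prop} [DecidableRel R]

theorem destutter'_append (l₁ l₂ : List α) (a : α) :
    (l₁ ++ l₂).destutter' R a = (l₁.destutter' R a).dropLast ++
      l₂.destutter' R ((l₁.destutter' R a).getLast (l₁.destutter'_ne_nil R)) := by
  induction l₁ generalizing a with
  | nil => simp
  | cons b l ih =>
    by_cases h : R a b
    · simp only [cons_append, destutter'_cons_pos _ h, ih, getLast_cons (l.destutter'_ne_nil R),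
        dropLast_cons_of_ne_nil (l.destutter'_ne_nil R)]
    · simp only [cons_append, destutter'_cons_neg _ h, ih]

theorem exists_destutter'_eq_cons (l : List α) (a : α) : ∃ t, l.destutter' R a = a :: t := by
  induction l generalizing a with
  | nil => exact ⟨[], rfl⟩
  | cons b l ih =>
    by_cases h : R a b
    · exact ⟨_, destutter'_cons_pos _ h⟩
    · rw [destutter'_cons_neg _ h]; exact ih a

theorem destutter'_prefix_destutter'_append (l₁ l₂ : List α) (a : α) :
    l₁.destutter' R a <+: (l₁ ++ l₂).destutter' R a := by
  induction l₁ generalizing a with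
  | nil =>
    obtain ⟨t, ht⟩ := l₂.exists_destutter'_eq_cons a (R := R)
    exact ⟨t, by simp [ht]⟩
  | cons b l ih =>
    by_cases h : R a b
    · simpa [destutter'_cons_pos _ h] using ih b
    · simpa [destutter'_cons_neg _ h] using ih a

theorem destutter_prefix_destutter_append : ∀ l₁ l₂ : List α,
    l₁.destutter R <+: (l₁ ++ l₂).destutter R
  | [], _ => nil_prefix
  | a :: l, l₂ => destutter'_prefix_destutter'_append l l₂ a

end Rel

section Ne

variable [DecidableEq α]

theorem destutter_ne_suffix_destutter' (l : List α) (a : α) :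
    l.destutter (· ≠ ·) <:+ l.destutter' (· ≠ ·) a := by
  cases l with
  | nil => exact nil_suffix
  | cons b l =>
    by_cases h : a = b
    · subst h; simp [destutter_cons']
    · simp [destutter_cons', h]

theorem destutter_ne_suffix_destutter_append (l₁ l₂ : List α) :
    l₂.destutter (· ≠ ·) <:+ (l₁ ++ l₂).destutter (· ≠ ·) := by
  cases l₁ with
  | nil => exact suffix_refl _
  | cons a l =>
    rw [cons_append, destutter_cons', destutter'_append]
    exact (destutter_ne_suffix_destutter' _ _).trans (suffix_append _ _)

theorem IsInfix.destutter_ne {l₁ l₂ : List α} (h : l₁ <:+: l₂) :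
    l₁.destutter (· ≠ ·) <:+: l₂.destutter (· ≠ ·) := by
  obtain ⟨s, t, rfl⟩ := h
  rw [append_assoc]
  exact (destutter_prefix_destutter_append l₁ t).isInfix.trans
    (destutter_ne_suffix_destutter_append s _).isInfix

theorem subset_destutter'_ne (l : List α) (a : α) : a :: l ⊆ l.destutter' (· ≠ ·) a := by
  induction l generalizing a with
  | nil => simp
  | cons b l ih =>
    by_cases h : a = b
    · subst h; simpa using ih a
    · rw [destutter'_cons_pos _ h]
      exact cons_subset_cons _ (ih b)

theorem subset_destutter_ne : ∀ l : List α, l ⊆ l.destutter (· ≠ ·)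
  | [] => Subset.refl _
  | a :: l => subset_destutter'_ne l a

theorem destutter'_ne_replicate_append (m : ℕ) (a : α) (l : List α) :
    (replicate m a ++ l).destutter' (· ≠ ·) a = l.destutter' (· ≠ ·) a := by
  induction m with
  | zero => rfl
  | succ m ih => simpa [replicate_succ] using ih

theorem destutter'_ne_flatten_replicate (ps : List (α × ℕ)) (hps : ∀ p ∈ ps, 0 < p.2) (b : α)
    (hch : (b :: ps.map Prod.fst).IsChain (· ≠ ·)) :
    (ps.map fun p => replicate p.2 p.1).flatten.destutter' (· ≠ ·) b = b :: ps.map Prod.fst := by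
  induction ps generalizing b with
  | nil => rfl
  | cons p ps ih =>
    obtain ⟨a, k⟩ := p
    obtain ⟨j, rfl⟩ := Nat.exists_eq_add_one_of_ne_zero (hps _ mem_cons_self).ne'
    simp only [map_cons, isChain_cons_cons] at hch
    simp only [map_cons, flatten_cons, replicate_succ, cons_append,
      destutter'_cons_pos _ hch.1, destutter'_ne_replicate_append,
      ih (fun p hp => hps p (mem_cons_of_mem _ hp)) a hch.2]

theorem destutter_ne_flatten_replicate (ps : List (α × ℕ)) (hps : ∀ p ∈ ps, 0 < p.2)
    (hch : (ps.map Prod.fst).IsChain (· ≠ ·)) :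
    (ps.map fun p => replicate p.2 p.1).flatten.destutter (· ≠ ·) = ps.map Prod.fst := by
  cases ps with
  | nil => rfl
  | cons p ps =>
    obtain ⟨a, k⟩ := p
    obtain ⟨j, rfl⟩ := Nat.exists_eq_add_one_of_ne_zero (hps _ mem_cons_self).ne'
    simp only [map_cons, flatten_cons, replicate_succ, cons_append, destutter_cons',
      destutter'_ne_replicate_append]
    exact destutter'_ne_flatten_replicate ps (fun p hp => hps p (mem_cons_of_mem _ hp)) a hch

end Ne

end List

section SquareFree

variable {α : Type*}

theorem SquareFree.infix {l₁ l₂ : List α} (h : SquareFree l₂) (h' : l₁ <:+: l₂) :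
    SquareFree l₁ :=
  fun X hX hXX => h X hX (hXX.trans h')

theorem SquareFree.isChain_ne_s13 {l : List α} (h : SquareFree l) : l.IsChain (· ≠ ·) :=
  List.isChain_iff_forall_rel_of_append_cons_cons.mpr fun a b l₁ l₂ hl hab =>
    h [a] (List.cons_ne_nil _ _) ⟨l₁, l₂, by simp [hl, hab]⟩

variable [DecidableEq α]

theorem exists_destutter_ne_eq_singleton_of_squareFree {X : List α} (hX : X ≠ [])
    (h : SquareFree ((X ++ X).destutter (· ≠ ·))) : ∃ c, X.destutter (· ≠ ·) = [c] := by
  obtain ⟨x, X', rfl⟩ := List.exists_cons_of_ne_nil hX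
  set D := X'.destutter' (· ≠ ·) x with hD_def
  have hD : D ≠ [] := X'.destutter'_ne_nil _
  set c := D.getLast hD
  have hDc : D.dropLast ++ [c] = D := List.dropLast_append_getLast hD
  have hXX : (x :: X' ++ x :: X').destutter (· ≠ ·) =
      D.dropLast ++ (x :: X').destutter' (· ≠ ·) c := by
    rw [List.cons_append, List.destutter_cons', List.destutter'_append]
  by_cases hcx : c = x
  · have hXX' : (x :: X' ++ x :: X').destutter (· ≠ ·) = D.dropLast ++ D.dropLast ++ [c] :=
      calc _ = D.dropLast ++ D := by rw [hXX, List.destutter'_cons_neg _ (not_not.mpr hcx), hcx]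
        _ = D.dropLast ++ D.dropLast ++ [c] := by rw [List.append_assoc, hDc]
    have hnil : D.dropLast = [] := by
      by_contra hne
      exact h _ hne ⟨[], [c], by rw [hXX']; simp⟩
    exact ⟨c, by rw [List.destutter_cons', ← hD_def, ← hDc, hnil, List.nil_append]⟩
  · have hXX' : (x :: X' ++ x :: X').destutter (· ≠ ·) = D ++ D :=
      calc _ = D.dropLast ++ c :: D := by rw [hXX, List.destutter'_cons_pos _ hcx]
        _ = D.dropLast ++ [c] ++ D := by simp
        _ = D ++ D := by rw [hDc]
    exact absurd ⟨[], [], by rw [hXX']; simp⟩ (h D hD)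

end SquareFree

/-- If `W = a 0 ⋯ a (n-1)` is square-free and `V = (a 0)^{k 0} ⋯ (a (n-1))^{k (n-1)}`
with all `k i > 0`, then every square `X ++ X` occurring in `V` is a power of a single
letter: `X = x ^ m` for some `m > 0` and some letter `x = a i`. -/
theorem squares_in_blowup {α : Type*} (n : ℕ) (a : Fin n → α) (k : Fin n → ℕ)
    (hk : ∀ i, 0 < k i) (hsf : SquareFree (List.ofFn a))
    (V : List α) (hV : V = (List.ofFn fun i => List.replicate (k i) (a i)).flatten) :
    ∀ X : List α, X ≠ [] → (X ++ X) <:+: V →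
      ∃ (i : Fin n) (m : ℕ), 0 < m ∧ X = List.replicate m (a i) := by
  classical
  intro X hX hXX
  have hVW : V.destutter (· ≠ ·) = List.ofFn a := by
    have := List.destutter_ne_flatten_replicate (List.ofFn fun i => (a i, k i))
      (by simpa [List.mem_ofFn] using hk)
      (by simpa [List.map_ofFn, Function.comp_def] using hsf.isChain_ne_s13)
    simpa [List.map_ofFn, Function.comp_def, hV] using this
  obtain ⟨c, hc⟩ := exists_destutter_ne_eq_singleton_of_squareFree hX
    (hsf.infix (hVW ▸ hXX.destutter_ne))
  have hX_eq : X = List.replicate X.length c :=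
    List.eq_replicate_iff.mpr ⟨rfl, fun y hy => by simpa [hc] using X.subset_destutter_ne hy⟩
  have hcX : c ∈ X := (X.destutter_sublist (· ≠ ·)).subset (by simp [hc])
  have hcW : c ∈ List.ofFn a :=
    hVW ▸ V.subset_destutter_ne (hXX.subset (List.mem_append_left _ hcX))
  obtain ⟨i, rfl⟩ := List.mem_ofFn.mp hcW
  exact ⟨i, X.length, List.length_pos_iff.mpr hX, hX_eq⟩
end

section
/- For every nonempty word W over the alphabet {a,b,c}, there is a square-free word of length at most 8 over {a,b,c} that is related to W, where two words are related if one can be obtained from the other by a finite sequence of square reductions and factor duplications (the inverse operations of square reductions). -/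
open Relation

local infix:50 " ~ " => EqvGen Step

variable {α : Type*}

theorem Step.append_append {x y : List α} (p q : List α) (h : Step x y) :
    Step (p ++ x ++ q) (p ++ y ++ q) := by
  obtain ⟨U, X, V, hX, rfl, rfl⟩ := h
  exact ⟨p ++ U, X, V ++ q, hX, by simp, by simp⟩

theorem eqvGen_step_append_append {x y : List α} (p q : List α) (h : x ~ y) :
    p ++ x ++ q ~ p ++ y ++ q := by
  induction h with
  | rel a b hab => exact .rel _ _ (hab.append_append p q)
  | refl a => exact .refl _
  | symm a b _ ih => exact .symm _ _ ih
  | trans a b c _ _ ih₁ ih₂ => exact .trans _ _ _ ih₁ ih₂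

theorem eqvGen_step_append_self (u : List α) : u ++ u ~ u := by
  rcases eq_or_ne u [] with rfl | hu
  · exact .refl _
  · exact .rel _ _ ⟨[], u, [], hu, by simp, by simp⟩

theorem eqvGen_step_absorb_singleton {u : List α} {a : α} (ha : a ∈ u) :
    u ++ [a] ++ u ~ u := by
  obtain ⟨r, s, rfl⟩ := List.append_of_mem ha
  calc r ++ a :: s ++ [a] ++ (r ++ a :: s)
      _ ~ r ++ [a] ++ r ++ [a] ++ s ++ [a] ++ r ++ [a] ++ s :=
        .symm _ _ (.rel _ _ ⟨[], r ++ [a], s ++ [a] ++ r ++ [a] ++ s, by simp, by simp, by simp⟩)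
      _ ~ r ++ [a] ++ r ++ [a] ++ s :=
        .rel _ _ ⟨r, [a] ++ r ++ [a] ++ s, [], by simp, by simp, by simp⟩
      _ ~ r ++ a :: s := .rel _ _ ⟨[], r ++ [a], s, by simp, by simp, by simp⟩

theorem eqvGen_step_absorb {u v : List α} (hv : v ⊆ u) : u ++ v ++ u ~ u := by
  induction v with
  | nil => simpa using eqvGen_step_append_self u
  | cons a v ih =>
    have ha : u ++ [a] ++ u ~ u := eqvGen_step_absorb_singleton (hv List.mem_cons_self)
    have hv' : u ++ v ++ u ~ u := ih (List.subset_of_cons_subset hv)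
    -- blowing up the last `u` to `u a u` creates the square `(v u a) (v u a)`
    calc u ++ a :: v ++ u
        _ ~ u ++ v ++ u ++ a :: v ++ u :=
          .symm _ _ (by simpa using eqvGen_step_append_append [] (a :: v ++ u) hv')
        _ ~ u ++ v ++ u ++ a :: v ++ (u ++ [a] ++ u) :=
          .symm _ _ (by simpa using eqvGen_step_append_append (u ++ v ++ u ++ a :: v) [] ha)
        _ ~ u ++ (v ++ u ++ [a]) ++ u :=
          .rel _ _ ⟨u, v ++ u ++ [a], u, by simp, by simp, by simp⟩
        _ ~ u ++ [a] ++ u := by simpa using eqvGen_step_append_append [] ([a] ++ u) hv'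
        _ ~ u := ha

theorem eqvGen_step_erase_middle {u m t : List α} (hut : u ⊆ t) (htu : t ⊆ u) (hm : m ⊆ t) :
    u ++ m ++ t ~ u ++ t := by
  have hmt : u ++ m ⊆ t := List.append_subset.2 ⟨hut, hm⟩
  calc u ++ m ++ t
      _ ~ u ++ t ++ u ++ m ++ t :=
        .symm _ _ (by simpa using eqvGen_step_append_append [] (m ++ t) (eqvGen_step_absorb htu))
      _ ~ u ++ t := by simpa using eqvGen_step_append_append u [] (eqvGen_step_absorb hmt)

theorem Reaches.eqvGen {w r : List α} (h : Reaches w r) : w ~ r :=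
  EqvGen.reflTransGen_le_eqvGen Step _ _ h

theorem exists_reaches_squareFree_s18 (w : List α) :
    ∃ r, Reaches w r ∧ SquareFree r ∧ r.length ≤ w.length := by
  by_cases hw : SquareFree w
  · exact ⟨w, .refl, hw, le_rfl⟩
  obtain ⟨X, hX, U, V, hsq⟩ : ∃ X : List α, X ≠ [] ∧ X ++ X <:+: w := by
    simpa [SquareFree] using hw
  have hXpos : 0 < X.length := List.length_pos_iff.2 hX
  have hshorter : (U ++ X ++ V).length < w.length := by rw [← hsq]; simp; omega
  obtain ⟨r, hr, hsf, hlen⟩ := exists_reaches_squareFree_s18 (U ++ X ++ V)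
  exact ⟨r, .head ⟨U, X, V, hX, hsq.symm, rfl⟩ hr, hsf, hlen.trans hshorter.le⟩
termination_by w.length
decreasing_by simpa using hshorter

theorem SquareFree.infix_s18 {w l : List α} (hw : SquareFree w) (hl : l <:+: w) : SquareFree l :=
  fun X hX hXX => hw X hX (hXX.trans hl)

theorem SquareFree.reverse {w : List α} (hw : SquareFree w) : SquareFree w.reverse := by
  intro X hX hXX
  refine hw X.reverse (by simpa using hX) ?_
  simpa using List.reverse_infix.2 hXX

theorem SquareFree.length_le_three {w : List α} (hw : SquareFree w) {a b : α}
    (hab : ∀ x ∈ w, x = a ∨ x = b) : w.length ≤ 3 := by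
  match w, hw, hab with
  | [], _, _ | [_], _, _ | [_, _], _, _ | [_, _, _], _, _ => simp
  | x₁ :: x₂ :: x₃ :: x₄ :: rest, hw, hab =>
    have h₁₂ : x₁ ≠ x₂ := fun h => hw [x₁] (by simp) ⟨[], x₃ :: x₄ :: rest, by simp [h]⟩
    have h₂₃ : x₂ ≠ x₃ := fun h => hw [x₂] (by simp) ⟨[x₁], x₄ :: rest, by simp [h]⟩
    have h₃₄ : x₃ ≠ x₄ := fun h => hw [x₃] (by simp) ⟨[x₁, x₂], rest, by simp [h]⟩
    have h₁₂₃₄ : ¬(x₁ = x₃ ∧ x₂ = x₄) := fun ⟨h, h'⟩ =>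
      hw [x₁, x₂] (by simp) ⟨[], rest, by simp [h, h']⟩
    simp only [List.mem_cons, forall_eq_or_imp] at hab
    obtain ⟨h₁ | h₁, h₂ | h₂, h₃ | h₃, h₄ | h₄, -⟩ := hab <;> simp_all

theorem SquareFree.length_le_three_of_notMem {w : List (Fin 3)} (hw : SquareFree w) {c : Fin 3}
    (hc : c ∉ w) : w.length ≤ 3 := by
  refine hw.length_le_three (a := c + 1) (b := c + 2) fun x hx => ?_
  have hxc : x ≠ c := ne_of_mem_of_not_mem hx hc
  have hFin3 : ∀ x c : Fin 3, x ≠ c → x = c + 1 ∨ x = c + 2 := by decide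
  exact hFin3 x c hxc

theorem SquareFree.mem_take_four {w : List (Fin 3)} (hw : SquareFree w) (hfull : ∀ x, x ∈ w)
    (c : Fin 3) : c ∈ w.take 4 := by
  by_contra hc
  have hlen : (w.take 4).length ≤ 3 :=
    (hw.infix_s18 (List.take_prefix 4 w).isInfix).length_le_three_of_notMem hc
  rw [List.length_take] at hlen
  rw [List.take_of_length_le (by omega)] at hc
  exact hc (hfull c)

theorem SquareFree.mem_rtake_four {w : List (Fin 3)} (hw : SquareFree w) (hfull : ∀ x, x ∈ w)
    (c : Fin 3) : c ∈ w.rtake 4 := by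
  simpa [List.rtake_eq_reverse_take_reverse] using hw.reverse.mem_take_four (by simpa using hfull) c

theorem related_to_short_squarefree_general (W : List (Fin 3)) :
    ∃ R : List (Fin 3), SquareFree R ∧ R.length ≤ 8 ∧ Relation.EqvGen Step W R := by
  obtain ⟨R, hWR, hR, -⟩ := exists_reaches_squareFree_s18 W
  by_cases hR8 : R.length ≤ 8
  · exact ⟨R, hR, hR8, hWR.eqvGen⟩
  have hfull : ∀ c, c ∈ R := fun c => by
    by_contra hc
    have := hR.length_le_three_of_notMem hc
    omega
  have hRps : R ~ R.take 4 ++ R.rtake 4 := calc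
    R ~ R ++ R := .symm _ _ (eqvGen_step_append_self R)
    _ = (R.take 4 ++ R.drop 4) ++ (R.rdrop 4 ++ R.rtake 4) :=
      congrArg₂ (· ++ ·) (R.take_append_drop 4).symm (R.take_append_drop _).symm
    _ = R.take 4 ++ (R.drop 4 ++ R.rdrop 4) ++ R.rtake 4 := by simp only [List.append_assoc]
    _ ~ R.take 4 ++ R.rtake 4 := eqvGen_step_erase_middle
      (fun x _ => hR.mem_rtake_four hfull x) (fun x _ => hR.mem_take_four hfull x)
      (fun x _ => hR.mem_rtake_four hfull x)
  obtain ⟨R', hR', hR'sf, hR'len⟩ := exists_reaches_squareFree_s18 (R.take 4 ++ R.rtake 4)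
  refine ⟨R', hR'sf, ?_, ?_⟩
  · refine hR'len.trans ?_
    simp only [List.length_append, List.length_take, List.rtake, List.length_drop]
    omega
  · calc W ~ R := hWR.eqvGen
      _ ~ R.take 4 ++ R.rtake 4 := hRps
      _ ~ R' := hR'.eqvGen

/-- Every nonempty ternary word is related (by a finite sequence of square reductions
and factor duplications, i.e. in the equivalence relation generated by single square
reductions) to a square-free word of length at most `8`. -/
theorem related_to_short_squarefree (W : List (Fin 3)) (hW : W ≠ []) :
    ∃ R : List (Fin 3), SquareFree R ∧ R.length ≤ 8 ∧ Relation.EqvGen Step W R :=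
  related_to_short_squarefree_general W
end
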